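/- arXiv:2507.15902 — 14 statements merged into one kernel-verified Lean document; each statement's English description precedes it below -/
import Mathlib

section
/- For all (a₁,b₁) and (a₂,b₂) in 𝓘, there exists a directed path (a nonempty chain of consecutive edges, i.e. the transitive closure of the edge relation) from (a₁,b₁) to (a₂,b₂) if and only if the interval [a₁,b₁] is strictly contained in [a₂,b₂] (that is, a₂ ≤ a₁, b₁ ≤ b₂ and (a₁,b₁) ≠ (a₂,b₂)). -/
/-- The set of flooded-cavern intervals: pairs `(a,b)` with `i ≤ a < b ≤ j`,
`g t ≥ g a` for all `a ≤ t < b`, and `g a > g b`. -/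
def FCI (i j : ℕ) (g : ℕ → ℕ) : Set (ℕ × ℕ) :=
  {p | i ≤ p.1 ∧ p.1 < p.2 ∧ p.2 ≤ j ∧
    (∀ t, p.1 ≤ t → t < p.2 → g p.1 ≤ g t) ∧ g p.2 < g p.1}

/-- Strict containment of intervals: `[p.1, p.2] ⊊ [q.1, q.2]`. -/
def StrictSub (p q : ℕ × ℕ) : Prop := q.1 ≤ p.1 ∧ p.2 ≤ q.2 ∧ p ≠ q

/-- The edge relation of the flooded cavern tree: an edge from `p` to `q` when both belong
to `𝓘`, `p` is strictly contained in `q`, and no element of `𝓘` lies strictly between. -/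
def FCIEdge (i j : ℕ) (g : ℕ → ℕ) (p q : ℕ × ℕ) : Prop :=
  p ∈ FCI i j g ∧ q ∈ FCI i j g ∧ StrictSub p q ∧
    ¬ ∃ r ∈ FCI i j g, StrictSub p r ∧ StrictSub r q

theorem stmt1 (i j : ℕ) (g : ℕ → ℕ) (hij : i < j)
    (hgi : ∀ t, i ≤ t → t < j → g i ≤ g t) (hgj : g j < g i)
    (p q : ℕ × ℕ) (hp : p ∈ FCI i j g) (hq : q ∈ FCI i j g) :
    Relation.TransGen (FCIEdge i j g) p q ↔ StrictSub p q := by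
  have lenlt : ∀ a b : ℕ × ℕ, a ∈ FCI i j g → b ∈ FCI i j g → StrictSub a b →
      a.2 - a.1 < b.2 - b.1 := by
    intro a b ha hb ⟨h1, h2, h3⟩
    rw [Ne, Prod.ext_iff, not_and_or] at h3
    obtain ⟨_, ha2, _⟩ := ha
    obtain ⟨_, hb2, _⟩ := hb
    omega
  have strans : ∀ a b c : ℕ × ℕ, StrictSub a b → StrictSub b c → StrictSub a c := by
    intro a b c ⟨h1, h2, h3⟩ ⟨h4, h5, h6⟩
    refine ⟨h4.trans h1, h2.trans h5, ?_⟩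
    rintro rfl
    exact h6 (Prod.ext (le_antisymm h1 h4) (le_antisymm h5 h2))
  constructor
  · intro h
    induction h with
    | single e => exact e.2.2.1
    | tail _ e ih => exact strans _ _ _ (ih e.1) e.2.2.1
  · intro hs
    clear hij hgi hgj
    have key : ∀ n : ℕ, ∀ p q : ℕ × ℕ, q.2 - q.1 - (p.2 - p.1) ≤ n →
        p ∈ FCI i j g → q ∈ FCI i j g → StrictSub p q →
        Relation.TransGen (FCIEdge i j g) p q := by
      intro n
      induction n with
      | zero =>
        intro p q hn hp hq hs
        have := lenlt p q hp hq hs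
        omega
      | succ n ih =>
        intro p q hn hp hq hs
        by_cases h : ∃ r ∈ FCI i j g, StrictSub p r ∧ StrictSub r q
        · obtain ⟨r, hr, h1, h2⟩ := h
          have l1 := lenlt p r hp hr h1
          have l2 := lenlt r q hr hq h2
          exact (ih p r (by omega) hp hr h1).trans (ih r q (by omega) hr hq h2)
        · exact Relation.TransGen.single ⟨hp, hq, hs, h⟩
    exact key _ p q le_rfl hp hq hs
end

section
/- For every (a,b) ∈ 𝓘, there is no (a',b') ∈ 𝓘 with an edge from (a',b') to (a,b) if and only if b = a + 1. Moreover, for every t with i ≤ t and t + 1 ≤ j, the pair (t, t+1) belongs to 𝓘 if and only if g(t+1) < g(t). -/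
lemma strictSub_len {p q : ℕ × ℕ} (hp : p.1 < p.2) (h : StrictSub p q) :
    p.2 - p.1 < q.2 - q.1 := by
  obtain ⟨h1, h2, h3⟩ := h
  have : p.1 ≠ q.1 ∨ p.2 ≠ q.2 := by
    by_contra hc
    push_neg at hc
    exact h3 (Prod.ext hc.1 hc.2)
  omega

theorem stmt2 (i j : ℕ) (g : ℕ → ℕ) (hij : i < j)
    (hgi : ∀ t, i ≤ t → t < j → g i ≤ g t) (hgj : g j < g i) :
    (∀ p ∈ FCI i j g,
      ((¬ ∃ q : ℕ × ℕ, q ∈ FCI i j g ∧ FCIEdge i j g q p) ↔ p.2 = p.1 + 1)) ∧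
    (∀ t : ℕ, i ≤ t → t + 1 ≤ j → ((t, t + 1) ∈ FCI i j g ↔ g (t + 1) < g t)) := by
  classical
  constructor
  · rintro ⟨a, b⟩ hp
    obtain ⟨hia, hab, hbj, hmin, hdrop⟩ := hp
    simp only [FCI, Set.mem_setOf_eq] at hmin hdrop ⊢
    constructor
    · intro hno
      by_contra hne
      have hb2 : a + 2 ≤ b := by omega
      -- minimizer over [a+1, b-1]
      obtain ⟨m, hm, hmle⟩ := Finset.exists_min_image (Finset.Icc (a + 1) (b - 1)) g
        ⟨a + 1, by simp [Finset.mem_Icc]; omega⟩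
      rw [Finset.mem_Icc] at hm
      have hr0 : ((m, b) : ℕ × ℕ) ∈ FCI i j g := by
        refine ⟨by simp; omega, by simp; omega, by simpa using hbj, ?_, ?_⟩
        · intro t ht1 ht2
          simp only at ht1 ht2 ⊢
          exact hmle t (Finset.mem_Icc.mpr (by omega))
        · simp only
          have := hmin m (by omega) (by omega)
          omega
      have hr0sub : StrictSub (m, b) (a, b) := by
        refine ⟨by simp; omega, by simp, ?_⟩
        intro h
        have := congrArg Prod.fst h
        simp at this
        omega
      set P : ℕ → Prop := fun d => ∃ r, r ∈ FCI i j g ∧ StrictSub r (a, b) ∧ r.2 - r.1 = d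
        with hPdef
      have hP0 : P (b - m) := ⟨(m, b), hr0, hr0sub, rfl⟩
      have hPd : P (Nat.findGreatest P (b - a)) :=
        Nat.findGreatest_spec (show b - m ≤ b - a by omega) hP0
      obtain ⟨r, hr, hrsub, hrd⟩ := hPd
      apply hno
      refine ⟨r, hr, hr, ⟨hia, hab, hbj, hmin, hdrop⟩, hrsub, ?_⟩
      rintro ⟨s, hs, hrs, hsp⟩
      have hlen : r.2 - r.1 < s.2 - s.1 := strictSub_len hr.2.1 hrs
      have hsN : s.2 - s.1 ≤ b - a := by
        obtain ⟨h1, h2, -⟩ := hsp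
        simp only at h1 h2
        omega
      exact Nat.findGreatest_is_greatest (P := P) (by omega) hsN ⟨s, hs, hsp, rfl⟩
    · rintro hb ⟨q, hq, hedge⟩
      obtain ⟨-, -, ⟨h1, h2, h3⟩, -⟩ := hedge
      simp only at h1 h2
      obtain ⟨-, hq12, -, -, -⟩ := hq
      apply h3
      exact Prod.ext (by omega) (by omega)
  · intro t ht1 ht2
    constructor
    · rintro ⟨-, -, -, -, h⟩
      exact h
    · intro h
      exact ⟨ht1, by omega, ht2, fun s hs1 hs2 => by
        have : s = t := by omega
        simp [this], h⟩
end

section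
/- The pair (i,j) belongs to 𝓘; every (a,b) ∈ 𝓘 satisfies i ≤ a and b ≤ j; and every (a,b) ∈ 𝓘 with (a,b) ≠ (i,j) has a unique parent, i.e. there exists exactly one (a',b') ∈ 𝓘 such that there is an edge from (a,b) to (a',b'). (Thus the edge relation makes 𝓘 a simple descending rooted tree with root (i,j).) -/
theorem stmt3 (i j : ℕ) (g : ℕ → ℕ) (hij : i < j)
    (hgi : ∀ t, i ≤ t → t < j → g i ≤ g t) (hgj : g j < g i) :
    (i, j) ∈ FCI i j g ∧
    (∀ p ∈ FCI i j g, i ≤ p.1 ∧ p.2 ≤ j) ∧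
    (∀ p ∈ FCI i j g, p ≠ (i, j) →
      ∃! q : ℕ × ℕ, q ∈ FCI i j g ∧ FCIEdge i j g p q) := by
  classical
  have hnested : ∀ p q : ℕ × ℕ, p ∈ FCI i j g → q ∈ FCI i j g →
      p.1 ≤ q.1 → q.1 < p.2 → q.2 ≤ p.2 := by
    intro p q hp hq h1 h2
    by_contra h
    push_neg at h
    obtain ⟨_, hp2, _, hpmin, hplt⟩ := hp
    obtain ⟨_, hq2, _, hqmin, _⟩ := hq
    have h3 : g p.1 ≤ g q.1 := hpmin _ h1 h2
    have h4 : g q.1 ≤ g p.2 := hqmin _ (le_of_lt h2) h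
    omega
  have hroot : (i, j) ∈ FCI i j g := ⟨le_refl i, hij, le_refl j, hgi, hgj⟩
  refine ⟨hroot, fun p hp => ⟨hp.1, hp.2.2.1⟩, ?_⟩
  intro p hp hpne
  have hplt : p.1 < p.2 := hp.2.1
  have hS : ∃ n, ∃ q, q ∈ FCI i j g ∧ StrictSub p q ∧ q.2 - q.1 = n :=
    ⟨j - i, (i, j), hroot, ⟨hp.1, hp.2.2.1, hpne⟩, rfl⟩
  obtain ⟨q, hq, hsub, hlen⟩ := Nat.find_spec hS
  -- any element of FCI strictly containing p and strictly contained in q gives contradiction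
  have hnomid : ¬ ∃ r ∈ FCI i j g, StrictSub p r ∧ StrictSub r q := by
    rintro ⟨r, hr, hpr, hrq⟩
    have hrlt : r.1 < r.2 := hr.2.1
    have hlt : r.2 - r.1 < Nat.find hS := by
      rw [← hlen]
      obtain ⟨hq1, hq2, hqne⟩ := hrq
      have : r ≠ q := hqne
      rcases Nat.lt_or_ge (r.2 - r.1) (q.2 - q.1) with h | h
      · exact h
      · exfalso
        have h1 : r.1 = q.1 ∧ r.2 = q.2 := by omega
        exact this (Prod.ext h1.1 h1.2)
    exact Nat.find_min hS hlt ⟨r, hr, hpr, rfl⟩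
  have hedge : FCIEdge i j g p q := ⟨hp, hq, hsub, hnomid⟩
  refine ⟨q, ⟨hq, hedge⟩, ?_⟩
  rintro q' ⟨hq', _, _, hsub', hnomid'⟩
  by_contra hne
  rcases le_total q.1 q'.1 with h | h
  · -- q' ⊆ q
    have h2' : q'.1 < q.2 := lt_of_le_of_lt hsub'.1 (lt_of_lt_of_le hplt hsub.2.1)
    have h3 : q'.2 ≤ q.2 := hnested q q' hq hq' h h2'
    exact hnomid ⟨q', hq', hsub', h, h3, hne⟩
  · -- q ⊆ q'
    have h2' : q.1 < q'.2 := lt_of_le_of_lt hsub.1 (lt_of_lt_of_le hplt hsub'.2.1)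
    have h3 : q.2 ≤ q'.2 := hnested q' q hq' hq h h2'
    exact hnomid' ⟨q, hq, hsub, h, h3, fun e => hne e.symm⟩
end

section
/- For any two distinct elements (a₁,b₁) and (a₂,b₂) of 𝓘 whose intervals intersect (i.e. max(a₁,a₂) ≤ min(b₁,b₂)), one of the following holds: [a₁,b₁] is strictly contained in [a₂,b₂]; or [a₂,b₂] is strictly contained in [a₁,b₁]; or the intersection is a single point, namely b₁ = a₂ or b₂ = a₁. -/
theorem stmt4 (i j : ℕ) (g : ℕ → ℕ) (hij : i < j)
    (hgi : ∀ t, i ≤ t → t < j → g i ≤ g t) (hgj : g j < g i)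
    (p q : ℕ × ℕ) (hp : p ∈ FCI i j g) (hq : q ∈ FCI i j g) (hne : p ≠ q)
    (hint : max p.1 q.1 ≤ min p.2 q.2) :
    StrictSub p q ∨ StrictSub q p ∨ p.2 = q.1 ∨ q.2 = p.1 := by
  obtain ⟨_, hp1, _, hpm, hpd⟩ := hp
  obtain ⟨_, hq1, _, hqm, hqd⟩ := hq
  rcases lt_trichotomy p.1 q.1 with h | h | h
  · rcases le_or_gt q.2 p.2 with h2 | h2
    · exact Or.inr (Or.inl ⟨h.le, h2, fun e => hne e.symm⟩)
    · have ha : q.1 ≤ p.2 := le_trans (le_max_right _ _) (hint.trans (min_le_left _ _))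
      rcases eq_or_lt_of_le ha with e | hlt
      · exact Or.inr (Or.inr (Or.inl e.symm))
      · exact absurd ((hpm q.1 h.le hlt).trans (hqm p.2 hlt.le h2)) (not_le.mpr hpd)
  · rcases le_or_gt p.2 q.2 with h2 | h2
    · exact Or.inl ⟨h.ge, h2, hne⟩
    · exact Or.inr (Or.inl ⟨h.le, h2.le, fun e => hne e.symm⟩)
  · rcases le_or_gt p.2 q.2 with h2 | h2
    · exact Or.inl ⟨h.le, h2, hne⟩
    · have ha : p.1 ≤ q.2 := le_trans (le_max_left _ _) (hint.trans (min_le_right _ _))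
      rcases eq_or_lt_of_le ha with e | hlt
      · exact Or.inr (Or.inr (Or.inr e.symm))
      · exact absurd ((hqm p.1 h.le hlt).trans (hpm q.2 hlt.le h2)) (not_le.mpr hqd)
end

section
/- For every (a,b) ∈ 𝓘 with a + 1 < b, there exist an integer l ≥ 1 and a strictly increasing sequence c : Fin (l+1) → ℕ with c 0 = a+1 and c l = b, such that (c s, c (s+1)) ∈ 𝓘 for every s < l, and such that the set of sources of edges with aim (a,b) is exactly { (c s, c (s+1)) : s < l } (i.e. (a',b') ∈ 𝓘 has an edge to (a,b) if and only if (a',b') = (c s, c (s+1)) for some s < l). -/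
open Finset

theorem Fin.exists_castSucc_le_lt_succ {α : Type*} [LinearOrder α] :
    ∀ {l : ℕ} (c : Fin (l + 1) → α) {x : α}, c 0 ≤ x → x < c (Fin.last l) →
      ∃ s : Fin l, c s.castSucc ≤ x ∧ x < c s.succ
  | 0, _, _, h0, hlast => absurd (h0.trans_lt hlast) (lt_irrefl _)
  | l + 1, c, x, h0, hlast => by
    by_cases hx : x < c (Fin.last l).castSucc
    · obtain ⟨s, hs⟩ := exists_castSucc_le_lt_succ (fun s => c s.castSucc) h0 hx
      exact ⟨s.castSucc, hs⟩
    · exact ⟨Fin.last l, not_lt.1 hx, hlast⟩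

def prefixMinima (g : ℕ → ℕ) (lo hi : ℕ) : Finset ℕ :=
  (Icc lo hi).filter fun t => ∀ u ∈ Ico lo t, g t < g u

section PrefixMinima

variable {g : ℕ → ℕ} {lo hi t : ℕ}

theorem mem_prefixMinima :
    t ∈ prefixMinima g lo hi ↔ lo ≤ t ∧ t ≤ hi ∧ ∀ u, lo ≤ u → u < t → g t < g u := by
  simp only [prefixMinima, mem_filter, mem_Icc, mem_Ico, and_imp, and_assoc]

theorem left_mem_prefixMinima (h : lo ≤ hi) : lo ∈ prefixMinima g lo hi :=
  mem_prefixMinima.2 ⟨le_rfl, h, fun _ hu hu' => absurd hu (not_le.2 hu')⟩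

theorem exists_mem_prefixMinima_le (hlo : lo ≤ t) (hhi : t ≤ hi) :
    ∃ r ∈ prefixMinima g lo hi, r ≤ t ∧ g r ≤ g t := by
  induction t using Nat.strong_induction_on with
  | _ t ih =>
    by_cases h : ∀ u, lo ≤ u → u < t → g t < g u
    · exact ⟨t, mem_prefixMinima.2 ⟨hlo, hhi, h⟩, le_rfl, le_rfl⟩
    · push Not at h
      obtain ⟨u, hlu, hut, hgu⟩ := h
      obtain ⟨r, hr, hru, hgr⟩ := ih u hut hlu (hut.le.trans hhi)
      exact ⟨r, hr, hru.trans hut.le, hgr.trans hgu⟩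

theorem apply_le_of_adjacent_prefixMinima {x y : ℕ} (hx : x ∈ prefixMinima g lo hi)
    (hy : y ∈ prefixMinima g lo hi) (hgap : ∀ z ∈ prefixMinima g lo hi, z ≤ x ∨ y ≤ z)
    (hxt : x ≤ t) (hty : t < y) : g x ≤ g t := by
  obtain ⟨hlox, -, hxmin⟩ := mem_prefixMinima.1 hx
  obtain ⟨r, hr, hrt, hgr⟩ :=
    exists_mem_prefixMinima_le (hlox.trans hxt) (hty.le.trans (mem_prefixMinima.1 hy).2.1)
  rcases hgap r hr with hrx | hyr
  · rcases hrx.lt_or_eq with hrx | rfl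
    · exact (hxmin r (mem_prefixMinima.1 hr).1 hrx).le.trans hgr
    · exact hgr
  · exact absurd (hyr.trans hrt) (not_le.2 hty)

end PrefixMinima

namespace FCI

variable {i j : ℕ} {g : ℕ → ℕ} {p q r : ℕ × ℕ}

theorem snd_le_of_fst_mem_Ico (hq : q ∈ FCI i j g) (hr : r ∈ FCI i j g) (h₁ : r.1 ≤ q.1)
    (h₂ : q.1 < r.2) : q.2 ≤ r.2 := by
  obtain ⟨-, -, -, hqmin, -⟩ := hq
  obtain ⟨-, -, -, hrmin, hrdrop⟩ := hr
  by_contra! h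
  have := hqmin r.2 h₂.le h
  have := hrmin q.1 h₁ (by omega)
  omega

theorem fst_lt_of_strictSub (hq : q ∈ FCI i j g) (hp : p ∈ FCI i j g) (h : StrictSub q p) :
    p.1 < q.1 := by
  obtain ⟨h₁, h₂, hne⟩ := h
  refine h₁.lt_of_ne fun heq => hne (Prod.ext heq.symm (h₂.antisymm ?_))
  exact snd_le_of_fst_mem_Ico hp hq heq.symm.le (heq ▸ hq.2.1)

theorem mem_of_adjacent_prefixMinima {lo hi x y : ℕ} (hlo : i ≤ lo) (hhi : hi ≤ j)
    (hx : x ∈ prefixMinima g lo hi) (hy : y ∈ prefixMinima g lo hi) (hxy : x < y)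
    (hgap : ∀ z ∈ prefixMinima g lo hi, z ≤ x ∨ y ≤ z) : (x, y) ∈ FCI i j g := by
  obtain ⟨hlox, -, -⟩ := mem_prefixMinima.1 hx
  obtain ⟨-, hyhi, hymin⟩ := mem_prefixMinima.1 hy
  exact ⟨by omega, hxy, by omega, fun t => apply_le_of_adjacent_prefixMinima hx hy hgap,
    hymin x hlox hxy⟩

theorem exists_tiling (hp : p ∈ FCI i j g) (hlt : p.1 + 1 < p.2) :
    ∃ l, 1 ≤ l ∧ ∃ c : Fin (l + 1) → ℕ, StrictMono c ∧ c 0 = p.1 + 1 ∧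
      c (Fin.last l) = p.2 ∧ ∀ s : Fin l, (c s.castSucc, c s.succ) ∈ FCI i j g := by
  obtain ⟨hip, -, hpj, hmin, hdrop⟩ := hp
  set C := prefixMinima g (p.1 + 1) p.2
  have hlo : p.1 + 1 ∈ C := left_mem_prefixMinima hlt.le
  have hhi : p.2 ∈ C := mem_prefixMinima.2
    ⟨hlt.le, le_rfl, fun u hu hu' => hdrop.trans_le (hmin u (by omega) hu')⟩
  obtain ⟨l, hl⟩ : ∃ l, C.card = l + 1 := Nat.exists_eq_add_one.2 (card_pos.2 ⟨_, hlo⟩)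
  have hl1 : 1 ≤ l := by
    have := one_lt_card.2 ⟨_, hlo, _, hhi, hlt.ne⟩
    omega
  set c := C.orderEmbOfFin hl
  have hcC : ∀ x ∈ C, ∃ s, c s = x := fun x hx => by
    rwa [← Set.mem_range, range_orderEmbOfFin, mem_coe]
  have hcmem : ∀ s, c s ∈ C := orderEmbOfFin_mem C hl
  have hc0 : c 0 = p.1 + 1 := by
    obtain ⟨s, hs⟩ := hcC _ hlo
    exact le_antisymm (hs ▸ c.monotone (Fin.zero_le s)) (mem_prefixMinima.1 (hcmem 0)).1
  have hclast : c (Fin.last l) = p.2 := by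
    obtain ⟨s, hs⟩ := hcC _ hhi
    exact le_antisymm (mem_prefixMinima.1 (hcmem _)).2.1 (hs ▸ c.monotone (Fin.le_last s))
  refine ⟨l, hl1, c, c.strictMono, hc0, hclast, fun s => ?_⟩
  refine mem_of_adjacent_prefixMinima (by omega) hpj (hcmem _) (hcmem _)
    (c.strictMono Fin.castSucc_lt_succ) fun z hz => ?_
  obtain ⟨r, rfl⟩ := hcC z hz
  simp only [c.le_iff_le]
  exact (le_or_gt r s.castSucc).imp_right Fin.castSucc_lt_iff_succ_le.1

theorem edge_iff_of_tiling (hp : p ∈ FCI i j g) {l : ℕ} {c : Fin (l + 1) → ℕ}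
    (hc : StrictMono c) (hc0 : c 0 = p.1 + 1) (hclast : c (Fin.last l) = p.2)
    (htile : ∀ s : Fin l, (c s.castSucc, c s.succ) ∈ FCI i j g) (q : ℕ × ℕ) :
    FCIEdge i j g q p ↔ ∃ s : Fin l, q = (c s.castSucc, c s.succ) := by
  have hcover : ∀ r ∈ FCI i j g, StrictSub r p →
      ∃ s : Fin l, c s.castSucc ≤ r.1 ∧ r.2 ≤ c s.succ := by
    intro r hr hrp
    have h₁ := fst_lt_of_strictSub hr hp hrp
    obtain ⟨s, hs₁, hs₂⟩ := Fin.exists_castSucc_le_lt_succ c (x := r.1) (by omega)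
      (by have := hr.2.1; have := hrp.2.1; omega)
    exact ⟨s, hs₁, snd_le_of_fst_mem_Ico hr (htile s) hs₁ hs₂⟩
  have hsub : ∀ s : Fin l, StrictSub (c s.castSucc, c s.succ) p := fun s => by
    have := hc.monotone (Fin.zero_le s.castSucc)
    have := hc.monotone (Fin.le_last s.succ)
    exact ⟨by omega, by omega, fun h => (show p.1 < c s.castSucc by omega).ne' (congrArg Prod.fst h)⟩
  constructor
  · rintro ⟨hq, -, hqp, hno⟩
    obtain ⟨s, hs₁, hs₂⟩ := hcover q hq hqp
    refine ⟨s, by_contra fun hne => hno ⟨_, htile s, ⟨hs₁, hs₂, hne⟩, hsub s⟩⟩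
  · rintro ⟨s, rfl⟩
    refine ⟨htile s, hp, hsub s, ?_⟩
    rintro ⟨r, hr, ⟨hr₁, hr₂, hne⟩, hrp⟩
    obtain ⟨t, ht₁, ht₂⟩ := hcover r hr hrp
    have hts : t = s := le_antisymm
      (Fin.castSucc_le_castSucc_iff.1 (hc.le_iff_le.1 (ht₁.trans hr₁)))
      (Fin.succ_le_succ_iff.1 (hc.le_iff_le.1 (hr₂.trans ht₂)))
    subst hts
    exact hne (Prod.ext (ht₁.antisymm hr₁) (hr₂.antisymm ht₂))

end FCI

theorem stmt5_general (i j : ℕ) (g : ℕ → ℕ)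
    (p : ℕ × ℕ) (hp : p ∈ FCI i j g) (hlt : p.1 + 1 < p.2) :
    ∃ l : ℕ, 1 ≤ l ∧ ∃ c : Fin (l + 1) → ℕ, StrictMono c ∧
      c 0 = p.1 + 1 ∧ c (Fin.last l) = p.2 ∧
      (∀ s : Fin l, (c s.castSucc, c s.succ) ∈ FCI i j g) ∧
      (∀ q : ℕ × ℕ, FCIEdge i j g q p ↔ ∃ s : Fin l, q = (c s.castSucc, c s.succ)) := by
  obtain ⟨l, hl, c, hc, hc0, hclast, htile⟩ := FCI.exists_tiling hp hlt
  exact ⟨l, hl, c, hc, hc0, hclast, htile, FCI.edge_iff_of_tiling hp hc hc0 hclast htile⟩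

theorem stmt5 (i j : ℕ) (g : ℕ → ℕ) (hij : i < j)
    (hgi : ∀ t, i ≤ t → t < j → g i ≤ g t) (hgj : g j < g i)
    (p : ℕ × ℕ) (hp : p ∈ FCI i j g) (hlt : p.1 + 1 < p.2) :
    ∃ l : ℕ, 1 ≤ l ∧ ∃ c : Fin (l + 1) → ℕ, StrictMono c ∧
      c 0 = p.1 + 1 ∧ c (Fin.last l) = p.2 ∧
      (∀ s : Fin l, (c s.castSucc, c s.succ) ∈ FCI i j g) ∧
      (∀ q : ℕ × ℕ, FCIEdge i j g q p ↔ ∃ s : Fin l, q = (c s.castSucc, c s.succ)) :=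
  stmt5_general i j g p hp hlt
end

section
/- For every integer n ≥ 1 and all α, β ∈ Fin N, the following are equivalent: (i) there is a directed path of length n from α to β in the dependency digraph, i.e. a function f : Fin (n+1) → Fin N with f 0 = α, f n = β and an edge from f s to f (s+1) for every s < n; (ii) there exists J : Fin N → ℝ with all coordinates nonnegative such that the (β,α) entry of the n-th power M(J)^n of the Jacobian matrix is strictly positive (equivalently, the β-coordinate of the n-fold application of the linear map v ↦ M(J)·v to the α-th standard basis vector is strictly positive). -/
open MvPolynomial

/-- The dependency digraph on `Fin N`: an edge from `i` to `j` iff the variable `X i`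
occurs in the polynomial `ψ j`. -/
def depEdge (N : ℕ) (ψ : Fin N → MvPolynomial (Fin N) ℝ) (i j : Fin N) : Prop :=
  ∃ m ∈ (ψ j).support, 0 < m i

/-- The Jacobian matrix of the polynomial family `ψ` evaluated at `J`:
entry `(j, i)` is `∂(ψ j)/∂X_i` evaluated at `J`. -/
noncomputable def jacMat (N : ℕ) (ψ : Fin N → MvPolynomial (Fin N) ℝ)
    (J : Fin N → ℝ) : Matrix (Fin N) (Fin N) ℝ :=
  fun j i => eval J (pderiv i (ψ j))

lemma eval_pderiv_eq {N : ℕ} (p : MvPolynomial (Fin N) ℝ) (i : Fin N) (J : Fin N → ℝ) :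
    eval J (pderiv i p) = ∑ m ∈ p.support,
      coeff m p * (m i : ℝ) * ((m - Finsupp.single i 1).prod fun k e => J k ^ e) := by
  conv_lhs => rw [p.as_sum]
  rw [map_sum, map_sum]
  refine Finset.sum_congr rfl fun m hm => ?_
  rw [pderiv_monomial, eval_monomial]

lemma jacMat_nonneg {N : ℕ} (ψ : Fin N → MvPolynomial (Fin N) ℝ)
    (hψ : ∀ (j : Fin N) (m : Fin N →₀ ℕ), 0 ≤ coeff m (ψ j))
    (J : Fin N → ℝ) (hJ : ∀ i, 0 ≤ J i) (j i : Fin N) : 0 ≤ jacMat N ψ J j i := by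
  rw [jacMat, eval_pderiv_eq]
  refine Finset.sum_nonneg fun m hm => ?_
  refine mul_nonneg (mul_nonneg (hψ j m) (by positivity)) ?_
  exact Finset.prod_nonneg fun k _ => pow_nonneg (hJ k) _

lemma jacMat_pos_of_depEdge {N : ℕ} (ψ : Fin N → MvPolynomial (Fin N) ℝ)
    (hψ : ∀ (j : Fin N) (m : Fin N →₀ ℕ), 0 ≤ coeff m (ψ j))
    {i j : Fin N} (h : depEdge N ψ i j) : 0 < jacMat N ψ (fun _ => 1) j i := by
  obtain ⟨m, hm, hmi⟩ := h
  rw [jacMat, eval_pderiv_eq]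
  refine Finset.sum_pos' (fun k _ => ?_) ⟨m, hm, ?_⟩
  · refine mul_nonneg (mul_nonneg (hψ j k) (by positivity)) ?_
    exact Finset.prod_nonneg fun k _ => pow_nonneg zero_le_one _
  · have hc : 0 < coeff m (ψ j) :=
      lt_of_le_of_ne (hψ j m) (Ne.symm (by simpa using hm))
    have h1 : ((m - Finsupp.single i 1).prod fun k e => (1:ℝ) ^ e) = 1 := by
      simp [Finsupp.prod]
    rw [h1, mul_one]
    exact mul_pos hc (by exact_mod_cast hmi)

lemma depEdge_of_jacMat_pos {N : ℕ} (ψ : Fin N → MvPolynomial (Fin N) ℝ)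
    {J : Fin N → ℝ} {i j : Fin N} (h : 0 < jacMat N ψ J j i) : depEdge N ψ i j := by
  by_contra hc
  rw [jacMat, eval_pderiv_eq] at h
  have h0 : ∑ m ∈ (ψ j).support,
      coeff m (ψ j) * (m i : ℝ) * ((m - Finsupp.single i 1).prod fun k e => J k ^ e) = 0 := by
    refine Finset.sum_eq_zero fun m hm => ?_
    have : m i = 0 := by
      by_contra hmi
      exact hc ⟨m, hm, Nat.pos_of_ne_zero hmi⟩
    simp [this]
  rw [h0] at h
  exact lt_irrefl 0 h

lemma pow_entry_nonneg {N : ℕ} (A : Matrix (Fin N) (Fin N) ℝ)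
    (hA : ∀ i j, 0 ≤ A i j) (n : ℕ) : ∀ i j, 0 ≤ (A ^ n) i j := by
  induction n with
  | zero =>
    intro i j
    rcases eq_or_ne i j with h | h <;> simp [Matrix.one_apply, h]
  | succ n ih =>
    intro i j
    rw [pow_succ, Matrix.mul_apply]
    exact Finset.sum_nonneg fun k _ => mul_nonneg (ih i k) (hA k j)

lemma pow_entry_pos_iff {N : ℕ} (A : Matrix (Fin N) (Fin N) ℝ)
    (hA : ∀ i j, 0 ≤ A i j) : ∀ (n : ℕ) (α β : Fin N),
    0 < (A ^ n) β α ↔ ∃ f : Fin (n + 1) → Fin N, f 0 = α ∧ f (Fin.last n) = β ∧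
      ∀ s : Fin n, 0 < A (f s.succ) (f s.castSucc) := by
  intro n
  induction n with
  | zero =>
    intro α β
    simp only [pow_zero, Matrix.one_apply]
    constructor
    · intro h
      have hba : β = α := by by_contra hne; simp [hne] at h
      exact ⟨fun _ => α, rfl, by simp [hba], fun s => s.elim0⟩
    · rintro ⟨f, h0, hl, -⟩
      have hba : β = α := by rw [← h0, ← hl]; rfl
      simp [hba]
  | succ n ih =>
    intro α β
    rw [pow_succ, Matrix.mul_apply]
    constructor
    · intro h
      obtain ⟨i, _, hpos⟩ : ∃ i ∈ Finset.univ, 0 < (A ^ n) β i * A i α := by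
        by_contra hc
        push_neg at hc
        have : ∑ k, (A ^ n) β k * A k α ≤ 0 :=
          Finset.sum_nonpos fun k hk => hc k hk
        linarith
      have h1 : 0 < (A ^ n) β i := by
        rcases lt_or_ge 0 ((A ^ n) β i) with h' | h'
        · exact h'
        · exfalso; nlinarith [hA i α]
      have h2 : 0 < A i α := by
        rcases lt_or_ge 0 (A i α) with h' | h'
        · exact h'
        · exfalso; nlinarith [pow_entry_nonneg A hA n β i]
      obtain ⟨g, hg0, hgl, hgs⟩ := (ih i β).mp h1
      refine ⟨Fin.cons α g, rfl, ?_, ?_⟩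
      · rw [← Fin.succ_last, Fin.cons_succ, hgl]
      · intro s
        refine Fin.cases ?_ (fun t => ?_) s
        · simpa [hg0] using h2
        · simpa [← Fin.succ_castSucc] using hgs t
    · rintro ⟨f, hf0, hfl, hfs⟩
      have key : 0 < (A ^ n) β (f 1) * A (f 1) α := by
        have h2 : 0 < A (f 1) α := by
          have := hfs 0
          rw [Fin.castSucc_zero, hf0] at this
          exact this
        have h1 : 0 < (A ^ n) β (f 1) := by
          refine (ih (f 1) β).mpr ⟨f ∘ Fin.succ, rfl, ?_, fun t => ?_⟩
          · show f (Fin.succ (Fin.last n)) = β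
            rw [Fin.succ_last]; exact hfl
          · show 0 < A (f (Fin.succ t.succ)) (f (Fin.succ t.castSucc))
            rw [Fin.succ_castSucc]
            exact hfs t.succ
        exact mul_pos h1 h2
      refine Finset.sum_pos' (fun k _ => mul_nonneg (pow_entry_nonneg A hA n β k) (hA k α))
        ⟨f 1, Finset.mem_univ _, key⟩
  
theorem stmt6 (N : ℕ) (hN : 1 ≤ N) (ψ : Fin N → MvPolynomial (Fin N) ℝ)
    (hψ : ∀ (j : Fin N) (m : Fin N →₀ ℕ), 0 ≤ coeff m (ψ j))
    (n : ℕ) (hn : 1 ≤ n) (α β : Fin N) :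
    (∃ f : Fin (n + 1) → Fin N, f 0 = α ∧ f (Fin.last n) = β ∧
      ∀ s : Fin n, depEdge N ψ (f s.castSucc) (f s.succ)) ↔
    (∃ J : Fin N → ℝ, (∀ i, 0 ≤ J i) ∧ 0 < (jacMat N ψ J ^ n) β α) := by
  constructor
  · rintro ⟨f, hf0, hfl, hfs⟩
    refine ⟨fun _ => 1, fun _ => zero_le_one, ?_⟩
    refine (pow_entry_pos_iff _ (jacMat_nonneg ψ hψ _ fun _ => zero_le_one) n α β).mpr
      ⟨f, hf0, hfl, fun s => jacMat_pos_of_depEdge ψ hψ (hfs s)⟩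
  · rintro ⟨J, hJ, hpos⟩
    obtain ⟨f, hf0, hfl, hfs⟩ :=
      (pow_entry_pos_iff _ (jacMat_nonneg ψ hψ J hJ) n α β).mp hpos
    exact ⟨f, hf0, hfl, fun s => depEdge_of_jacMat_pos ψ (hfs s)⟩
end

section
/- Let (τ, J) ∈ ℂ × (Fin N → ℂ) with τ ≠ 0 and J = τ • ψ(J). If 1/τ does not belong to the spectrum of the derivative D_Jψ, then there exist ε > 0 and a function h : ℂ → (Fin N → ℂ) which is analytic on the open ball B(τ, ε), satisfies h(τ) = J and h(z) = z • ψ(h(z)) for all z ∈ B(τ, ε), and such that for every pair (z, K) with |z − τ| < ε and ‖K − J‖ < ε, if K = z • ψ(K) then K = h(z). (In particular the curve 𝒞 is a smooth analytic curve near (τ, J), locally parametrized by the first coordinate z.) -/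
/-!
The curve is the zero set of `F (z, K) = K - z • ψ K`, an analytic map whose partial derivative in
`K` at `(τ, J)` is `1 - τ • D_Jψ = τ • (τ⁻¹ - D_Jψ)`; this is invertible exactly because `1/τ` lies
outside the spectrum of `D_Jψ`. The analytic implicit function theorem then parametrizes the zero
set near `(τ, J)` by `z`.
-/

/-- The polynomial map `ψ : (Fin N → ℂ) → (Fin N → ℂ)` associated with a family `P`
of multivariate polynomials: `ψ(J) j = P j` evaluated at `J`. -/
noncomputable def psiMap (N : ℕ) (P : Fin N → MvPolynomial (Fin N) ℂ) :
    (Fin N → ℂ) → (Fin N → ℂ) :=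
  fun J j => MvPolynomial.eval J (P j)

open Metric Filter Topology ContDiff

theorem analyticAt_psiMap (N : ℕ) (P : Fin N → MvPolynomial (Fin N) ℂ) (K : Fin N → ℂ) :
    AnalyticAt ℂ (psiMap N P) K :=
  AnalyticAt.pi fun j => AnalyticOnNhd.eval_mvPolynomial (P j) K (Set.mem_univ K)

theorem spectrum.isUnit_one_sub_smul_of_inv_notMem {𝕜 A : Type*} [Field 𝕜] [Ring A]
    [Algebra 𝕜 A] {a : A} {c : 𝕜} (hc : c ≠ 0) (h : c⁻¹ ∉ spectrum 𝕜 a) :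
    IsUnit (1 - c • a) := by
  have h' := spectrum.notMem_iff.1 h
  rwa [Algebra.algebraMap_eq_smul_one, ← Units.val_mk0 (inv_ne_zero hc), ← Units.smul_def,
    IsUnit.smul_sub_iff_sub_inv_smul, Units.smul_def, Units.val_inv_eq_inv_val, Units.val_mk0,
    inv_inv] at h'

theorem ContinuousLinearMap.isInvertible_of_isUnit {R M : Type*} [Semiring R]
    [TopologicalSpace M] [AddCommMonoid M] [Module R M] {f : M →L[R] M} (hf : IsUnit f) :
    f.IsInvertible :=
  ⟨ContinuousLinearEquiv.ofUnit hf.unit, rfl⟩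

section ImplicitFunction

variable {𝕜 : Type*} [RCLike 𝕜]
  {E₁ : Type*} [NormedAddCommGroup E₁] [NormedSpace 𝕜 E₁] [CompleteSpace E₁]
  {E₂ : Type*} [NormedAddCommGroup E₂] [NormedSpace 𝕜 E₂] [CompleteSpace E₂]
  {F : Type*} [NormedAddCommGroup F] [NormedSpace 𝕜 F] [CompleteSpace F]

theorem AnalyticAt.exists_analyticOnNhd_ball_implicitFunction {f : E₁ × E₂ → F} {u : E₁ × E₂}
    (hf : AnalyticAt 𝕜 f u) (hinv : (fderiv 𝕜 f u ∘L .inr 𝕜 E₁ E₂).IsInvertible) :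
    ∃ ε > 0, ∃ h : E₁ → E₂, AnalyticOnNhd 𝕜 h (ball u.1 ε) ∧ h u.1 = u.2 ∧
      (∀ x ∈ ball u.1 ε, f (x, h x) = f u) ∧
      ∀ x y, dist x u.1 < ε → dist y u.2 < ε → f (x, y) = f u → y = h x := by
  have cdf : ContDiffAt 𝕜 ω f u := hf.contDiffAt
  have hω : (ω : WithTop ℕ∞) ≠ 0 := by simp
  set h := cdf.implicitFunction hω hinv
  have hsol : ∀ᶠ x in 𝓝 u.1, AnalyticAt 𝕜 h x ∧ f (x, h x) = f u :=
    (cdf.contDiffAt_implicitFunction hω hinv).analyticAt.eventually_analyticAt.and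
      (cdf.eventually_apply_implicitFunction hω hinv)
  obtain ⟨ε₁, hε₁, hball₁⟩ := Metric.eventually_nhds_iff.1 hsol
  obtain ⟨ε₂, hε₂, hball₂⟩ :=
    Metric.eventually_nhds_iff.1 (cdf.eventually_apply_eq_iff_implicitFunction hω hinv)
  refine ⟨min ε₁ ε₂, lt_min hε₁ hε₂, h, fun x hx => (hball₁ ?_).1,
    cdf.implicitFunction_apply_self hω hinv, fun x hx => (hball₁ ?_).2,
    fun x y hx hy hxy => ((hball₂ ?_).1 hxy).symm⟩
  · exact (mem_ball.1 hx).trans_le (min_le_left _ _)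
  · exact (mem_ball.1 hx).trans_le (min_le_left _ _)
  · rw [Prod.dist_eq]
    exact max_lt (hx.trans_le (min_le_right _ _)) (hy.trans_le (min_le_right _ _))

end ImplicitFunction

section FixedPointEquation

variable {𝕜 : Type*} [NontriviallyNormedField 𝕜]
  {E : Type*} [NormedAddCommGroup E] [NormedSpace 𝕜 E]

theorem fderiv_sub_smul_comp_inr {g : E → E} {c : 𝕜} {y : E} (hg : DifferentiableAt 𝕜 g y) :
    fderiv 𝕜 (fun p : 𝕜 × E => p.2 - p.1 • g p.2) (c, y) ∘L .inr 𝕜 𝕜 E =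
      1 - c • fderiv 𝕜 g y := by
  have hF : DifferentiableAt 𝕜 (fun p : 𝕜 × E => p.2 - p.1 • g p.2) (c, y) :=
    differentiableAt_snd.sub (differentiableAt_fst.smul (hg.comp _ differentiableAt_snd))
  have hslice : HasFDerivAt (fun x : E => x - c • g x) (1 - c • fderiv 𝕜 g y) y :=
    (hasFDerivAt_id y).sub (hg.hasFDerivAt.const_smul c)
  exact (hF.hasFDerivAt.comp y (hasFDerivAt_prodMk_right c y)).unique hslice

end FixedPointEquation

theorem stmt8_general (N : ℕ) (P : Fin N → MvPolynomial (Fin N) ℂ)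
    (τ : ℂ) (J : Fin N → ℂ) (hτ : τ ≠ 0) (hJ : J = τ • psiMap N P J)
    (hspec : (1 / τ) ∉ spectrum ℂ (fderiv ℂ (psiMap N P) J)) :
    ∃ ε > 0, ∃ h : ℂ → (Fin N → ℂ),
      AnalyticOnNhd ℂ h (Metric.ball τ ε) ∧ h τ = J ∧
      (∀ z ∈ Metric.ball τ ε, h z = z • psiMap N P (h z)) ∧
      (∀ (z : ℂ) (K : Fin N → ℂ), dist z τ < ε → ‖K - J‖ < ε →
        K = z • psiMap N P K → K = h z) := by
  set F : ℂ × (Fin N → ℂ) → (Fin N → ℂ) := fun p => p.2 - p.1 • psiMap N P p.2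
  have hF : AnalyticAt ℂ F (τ, J) :=
    analyticAt_snd.sub (analyticAt_fst.smul ((analyticAt_psiMap N P J).fun_comp analyticAt_snd))
  have hF₀ : F (τ, J) = 0 := sub_eq_zero.2 hJ
  have hinv : (fderiv ℂ F (τ, J) ∘L .inr ℂ ℂ (Fin N → ℂ)).IsInvertible := by
    rw [fderiv_sub_smul_comp_inr (analyticAt_psiMap N P J).differentiableAt]
    rw [one_div] at hspec
    exact ContinuousLinearMap.isInvertible_of_isUnit
      (spectrum.isUnit_one_sub_smul_of_inv_notMem hτ hspec)
  obtain ⟨ε, hε, h, hh, hhτ, hsol, huniq⟩ := hF.exists_analyticOnNhd_ball_implicitFunction hinv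
  refine ⟨ε, hε, h, hh, hhτ, fun z hz => ?_, fun z K hz hK hKz => huniq z K hz ?_ ?_⟩
  · simpa only [F, hF₀, sub_eq_zero] using hsol z hz
  · rwa [dist_eq_norm]
  · simpa only [F, hF₀, sub_eq_zero] using hKz

theorem stmt8 (N : ℕ) (hN : 1 ≤ N) (P : Fin N → MvPolynomial (Fin N) ℂ)
    (τ : ℂ) (J : Fin N → ℂ) (hτ : τ ≠ 0) (hJ : J = τ • psiMap N P J)
    (hspec : (1 / τ) ∉ spectrum ℂ (fderiv ℂ (psiMap N P) J)) :
    ∃ ε > 0, ∃ h : ℂ → (Fin N → ℂ),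
      AnalyticOnNhd ℂ h (Metric.ball τ ε) ∧ h τ = J ∧
      (∀ z ∈ Metric.ball τ ε, h z = z • psiMap N P (h z)) ∧
      (∀ (z : ℂ) (K : Fin N → ℂ), dist z τ < ε → ‖K - J‖ < ε →
        K = z • psiMap N P K → K = h z) :=
  stmt8_general N P τ J hτ hJ hspec
end

section
/- Let (τ, J) ∈ ℂ × (Fin N → ℂ) with τ ≠ 0 and J = τ • ψ(J), and write D := D_Jψ. Assume: 1/τ belongs to the spectrum of D; the maximal generalized eigenspace of D for the eigenvalue 1/τ (the union over k of the kernels of (D − (1/τ)·id)^k) has complex dimension 1; and ψ(J) does not belong to the range of the linear map id − τ•D. Then the linear map L : ℂ × (Fin N → ℂ) → (Fin N → ℂ) defined by L(ż, v) = v − τ•D(v) − ż • ψ(J) is surjective, and its kernel equals {(0, v) : D(v) = (1/τ) • v}; in particular this kernel has dimension 1. -/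
/-- The linear map `L(ż, v) = v - τ • D v - ż • w`. -/
noncomputable def Lmap (N : ℕ) (τ : ℂ) (D : (Fin N → ℂ) →L[ℂ] (Fin N → ℂ))
    (w : Fin N → ℂ) : (ℂ × (Fin N → ℂ)) →ₗ[ℂ] (Fin N → ℂ) :=
  (LinearMap.id - τ • (D : (Fin N → ℂ) →ₗ[ℂ] (Fin N → ℂ))).comp
      (LinearMap.snd ℂ ℂ (Fin N → ℂ))
    - (LinearMap.toSpanSingleton ℂ (Fin N → ℂ) w).comp (LinearMap.fst ℂ ℂ (Fin N → ℂ))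

theorem stmt9 (N : ℕ) (hN : 1 ≤ N) (P : Fin N → MvPolynomial (Fin N) ℂ)
    (τ : ℂ) (J : Fin N → ℂ) (hτ : τ ≠ 0) (hJ : J = τ • psiMap N P J)
    (D : (Fin N → ℂ) →L[ℂ] (Fin N → ℂ)) (hD : D = fderiv ℂ (psiMap N P) J)
    (hspec : (1 / τ) ∈ spectrum ℂ D)
    (hgen : Module.rank ℂ
      ↥(⨆ k : ℕ, LinearMap.ker
        (((D : (Fin N → ℂ) →ₗ[ℂ] (Fin N → ℂ)) - (1 / τ) • LinearMap.id) ^ k)) = 1)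
    (hrange : psiMap N P J ∉ Set.range (fun v : Fin N → ℂ => v - τ • D v)) :
    Function.Surjective (Lmap N τ D (psiMap N P J)) ∧
    (LinearMap.ker (Lmap N τ D (psiMap N P J)) : Set (ℂ × (Fin N → ℂ)))
      = {q : ℂ × (Fin N → ℂ) | q.1 = 0 ∧ D q.2 = (1 / τ) • q.2} ∧
    Module.rank ℂ ↥(LinearMap.ker (Lmap N τ D (psiMap N P J))) = 1 := by
  set w := psiMap N P J with hw
  -- pointwise formula for `Lmap`
  have hLapp : ∀ q : ℂ × (Fin N → ℂ),
      Lmap N τ D w q = (q.2 - τ • D q.2) - q.1 • w := by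
    intro q
    simp [Lmap, LinearMap.toSpanSingleton_apply]
  -- kernel set characterization
  have hker : (LinearMap.ker (Lmap N τ D w) : Set (ℂ × (Fin N → ℂ)))
      = {q : ℂ × (Fin N → ℂ) | q.1 = 0 ∧ D q.2 = (1 / τ) • q.2} := by
    ext ⟨z, v⟩
    simp only [SetLike.mem_coe, LinearMap.mem_ker, Set.mem_setOf_eq, hLapp]
    constructor
    · intro h
      have h' : v - τ • D v = z • w := by rwa [sub_eq_zero] at h
      have hz : z = 0 := by
        by_contra hz
        apply hrange
        refine ⟨z⁻¹ • v, ?_⟩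
        simp only [map_smul]
        rw [smul_comm τ z⁻¹, ← smul_sub, h', smul_smul, inv_mul_cancel₀ hz, one_smul]
      subst hz
      simp only [zero_smul, sub_eq_zero] at h'
      refine ⟨rfl, ?_⟩
      calc D v = (1 / τ) • (τ • D v) := by
            rw [smul_smul, one_div, inv_mul_cancel₀ hτ, one_smul]
        _ = (1 / τ) • v := by rw [← h']
    · rintro ⟨hz, hv⟩
      subst hz
      rw [hv, smul_smul, mul_one_div_cancel hτ, one_smul]
      simp
  -- the eigenspace
  set E : Submodule ℂ (Fin N → ℂ) :=
    LinearMap.ker ((D : (Fin N → ℂ) →ₗ[ℂ] (Fin N → ℂ)) - (1 / τ) • LinearMap.id) with hE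
  have hmemE : ∀ v, v ∈ E ↔ D v = (1 / τ) • v := by
    intro v
    simp [hE, LinearMap.mem_ker, sub_eq_zero]
  -- E is nontrivial, using the spectrum hypothesis
  have hEvec : ∃ v : Fin N → ℂ, v ≠ 0 ∧ D v = (1 / τ) • v := by
    by_contra hcon
    push_neg at hcon
    set g : (Fin N → ℂ) →ₗ[ℂ] (Fin N → ℂ) :=
      (1 / τ) • LinearMap.id - (D : (Fin N → ℂ) →ₗ[ℂ] (Fin N → ℂ)) with hg
    have hinj : Function.Injective g := by
      rw [← LinearMap.ker_eq_bot]
      rw [Submodule.eq_bot_iff]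
      intro v hv
      simp only [hg, LinearMap.mem_ker, LinearMap.sub_apply, LinearMap.smul_apply,
        LinearMap.id_apply, ContinuousLinearMap.coe_coe, sub_eq_zero] at hv
      by_contra hv0
      exact hcon v hv0 hv.symm
    have hsurj : Function.Surjective g :=
      (LinearMap.injective_iff_surjective).mp hinj
    let e : (Fin N → ℂ) ≃ₗ[ℂ] (Fin N → ℂ) := LinearEquiv.ofBijective g ⟨hinj, hsurj⟩
    let e' : (Fin N → ℂ) ≃L[ℂ] (Fin N → ℂ) := e.toContinuousLinearEquiv
    have hcoe : (e'.toUnit : (Fin N → ℂ) →L[ℂ] (Fin N → ℂ))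
        = algebraMap ℂ ((Fin N → ℂ) →L[ℂ] (Fin N → ℂ)) (1 / τ) - D := by
      ext x
      have : e' x = g x := rfl
      simp only [ContinuousLinearEquiv.toUnit, Units.val_mk] at *
      simp only [ContinuousLinearEquiv.coe_coe] at *
      rw [this]
      simp [g, one_div, Algebra.algebraMap_eq_smul_one]
    rw [spectrum.mem_iff] at hspec
    exact hspec (hcoe ▸ e'.toUnit.isUnit)
  -- rank of E is 1
  have hrankE : Module.rank ℂ E = 1 := by
    have hle : E ≤ ⨆ k : ℕ, LinearMap.ker
        (((D : (Fin N → ℂ) →ₗ[ℂ] (Fin N → ℂ)) - (1 / τ) • LinearMap.id) ^ k) := by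
      have := le_iSup (fun k : ℕ => LinearMap.ker
        (((D : (Fin N → ℂ) →ₗ[ℂ] (Fin N → ℂ)) - (1 / τ) • LinearMap.id) ^ k)) 1
      rwa [pow_one] at this
    have h1 : Module.rank ℂ E ≤ 1 := hgen ▸ Submodule.rank_mono hle
    obtain ⟨v, hv0, hv⟩ := hEvec
    have : Nontrivial E := by
      refine ⟨⟨⟨v, (hmemE v).mpr hv⟩, 0, ?_⟩⟩
      simp [hv0]
    exact le_antisymm h1 (Cardinal.one_le_iff_pos.mpr (rank_pos (R := ℂ) (M := E)))
  -- ker L = E.map inr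
  have hkerL : LinearMap.ker (Lmap N τ D w) = E.map (LinearMap.inr ℂ ℂ (Fin N → ℂ)) := by
    ext ⟨z, v⟩
    have hmem := Set.ext_iff.mp hker (z, v)
    simp only [SetLike.mem_coe, Set.mem_setOf_eq] at hmem
    rw [hmem]
    constructor
    · rintro ⟨hz, hv⟩
      exact ⟨v, (hmemE v).mpr hv, by simp [hz.symm]⟩
    · rintro ⟨y, hy, hxy⟩
      simp only [LinearMap.coe_inr, Prod.mk.injEq, Prod.ext_iff] at hxy
      obtain ⟨h1, h2⟩ := hxy
      exact ⟨h1.symm, h2 ▸ (hmemE y).mp hy⟩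
  have hrankker : Module.rank ℂ ↥(LinearMap.ker (Lmap N τ D w)) = 1 := by
    rw [hkerL]
    rw [← (Submodule.equivMapOfInjective _ (LinearMap.inr_injective) E).rank_eq]
    exact hrankE
  -- surjectivity via rank-nullity
  have hsurjL : Function.Surjective (Lmap N τ D w) := by
    rw [← LinearMap.range_eq_top]
    apply Submodule.eq_top_of_finrank_eq
    have hrn := LinearMap.finrank_range_add_finrank_ker (Lmap N τ D w)
    have hdom : Module.finrank ℂ (ℂ × (Fin N → ℂ)) = 1 + N := by
      rw [Module.finrank_prod, Module.finrank_self, Module.finrank_fin_fun]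
    have hkfin : Module.finrank ℂ ↥(LinearMap.ker (Lmap N τ D w)) = 1 :=
      Module.rank_eq_one_iff_finrank_eq_one.mp hrankker
    rw [hdom, hkfin] at hrn
    rw [Module.finrank_fin_fun]
    omega
  exact ⟨hsurjL, hker, hrankker⟩
end

section
/- Let A be an n × n complex matrix and B an n × n real matrix with nonnegative entries such that ‖A i j‖ ≤ B i j for all i, j. Then the spectral radius of A is at most the spectral radius of B (viewed as a complex matrix via entrywise coercion). Moreover, if ‖A i j‖ < B i j for all i, j and the spectral radius of B is nonzero, then the spectral radius of A is strictly less than that of B. -/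
/-!
Entrywise domination `‖A i j‖ ≤ B i j` propagates to all powers, `‖(A ^ k) i j‖ ≤ (B ^ k) i j`,
hence to the ℓ∞-operator norms `‖A ^ k‖ ≤ ‖B ^ k‖`, and Gelfand's formula
`ρ(M) = lim ‖M ^ k‖ ^ (1 / k)` gives `ρ(A) ≤ ρ(B)`. Under strict domination there are only finitely
many entries, so some `t < 1` still has `‖A i j‖ ≤ t * B i j`; then `ρ(A) ≤ ρ(t • B) = t * ρ(B)`,
which is `< ρ(B)` as soon as `ρ(B) ≠ 0`.
-/

open scoped ENNReal NNReal Pointwise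
open Filter Topology

namespace spectrum

theorem spectralRadius_smul {𝕜 A : Type*} [NormedField 𝕜] [Ring A] [Algebra 𝕜 A] (c : 𝕜)
    (a : A) : spectralRadius 𝕜 (c • a) = ‖c‖₊ * spectralRadius 𝕜 a := by
  rcases eq_or_ne c 0 with rfl | hc
  · simp
  · rw [spectralRadius, spectralRadius, ← Units.smul_mk0 hc, unit_smul_eq_smul, Units.smul_def,
      Units.val_mk0, ← Set.image_smul, iSup_image]
    simp_rw [smul_eq_mul, nnnorm_mul, ENNReal.coe_mul, ENNReal.mul_iSup]

theorem spectralRadius_lt_top {𝕜 A : Type*} [NormedField 𝕜] [NormedRing A] [NormedAlgebra 𝕜 A]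
    [CompleteSpace A] (a : A) : spectralRadius 𝕜 a < ⊤ :=
  (spectralRadius_le_pow_nnnorm_pow_one_div 𝕜 a 0).trans_lt (by finiteness)

theorem spectralRadius_mono_of_nnnorm_pow_le {A : Type*} [NormedRing A] [NormedAlgebra ℂ A]
    [CompleteSpace A] {a b : A} (h : ∀ k : ℕ, ‖a ^ k‖₊ ≤ ‖b ^ k‖₊) :
    spectralRadius ℂ a ≤ spectralRadius ℂ b :=
  le_of_tendsto_of_tendsto' (pow_nnnorm_pow_one_div_tendsto_nhds_spectralRadius a)
    (pow_nnnorm_pow_one_div_tendsto_nhds_spectralRadius b) fun k =>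
      ENNReal.rpow_le_rpow (ENNReal.coe_le_coe.2 (h k)) (by positivity)

end spectrum

theorem Finite.exists_lt_one_forall_le_mul {ι : Type*} [Finite ι] {f g : ι → ℝ}
    (h : ∀ i, f i < g i) : ∃ t, 0 ≤ t ∧ t < 1 ∧ ∀ i, f i ≤ t * g i := by
  have hnear : ∀ i, ∀ᶠ t in 𝓝[<] (1 : ℝ), f i ≤ t * g i := fun i =>
    nhdsWithin_le_nhds <|
      ((continuous_id.mul continuous_const).tendsto' 1 (g i) (one_mul _)).eventually
        (eventually_ge_nhds (h i))
  obtain ⟨t, ht, ht0, ht1⟩ :=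
    ((eventually_all.2 hnear).and (Ioo_mem_nhdsLT (zero_lt_one' ℝ))).exists
  exact ⟨t, ht0.le, ht1, ht⟩

namespace Matrix

variable {ι : Type*} [Fintype ι] [DecidableEq ι]

theorem norm_pow_apply_le_pow_apply {R : Type*} [SeminormedRing R] [NormOneClass R]
    {A : Matrix ι ι R} {B : Matrix ι ι ℝ} (h : ∀ i j, ‖A i j‖ ≤ B i j) (k : ℕ) (i j : ι) :
    ‖(A ^ k) i j‖ ≤ (B ^ k) i j := by
  induction k generalizing j with
  | zero => by_cases hij : i = j <;> simp [hij]
  | succ k ih =>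
    rw [pow_succ, pow_succ, mul_apply, mul_apply]
    refine (norm_sum_le _ _).trans (Finset.sum_le_sum fun l _ => ?_)
    exact (norm_mul_le _ _).trans
      (mul_le_mul (ih l) (h l j) (norm_nonneg _) ((norm_nonneg _).trans (ih l)))

section LinftyOpNorm

attribute [local instance] Matrix.linftyOpSeminormedAddCommGroup Matrix.linftyOpNormedRing
  Matrix.linftyOpNormedAlgebra

theorem linfty_opNNNorm_le_of_norm_apply_le {m n α β : Type*} [Fintype m] [Fintype n]
    [SeminormedAddCommGroup α] [SeminormedAddCommGroup β] {A : Matrix m n α} {C : Matrix m n β}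
    (h : ∀ i j, ‖A i j‖ ≤ ‖C i j‖) : ‖A‖₊ ≤ ‖C‖₊ := by
  rw [linfty_opNNNorm_def, linfty_opNNNorm_def]
  exact Finset.sup_mono_fun fun i _ => Finset.sum_le_sum fun j _ => h i j

theorem spectralRadius_le_of_norm_apply_le {A : Matrix ι ι ℂ} {B : Matrix ι ι ℝ}
    (h : ∀ i j, ‖A i j‖ ≤ B i j) :
    spectralRadius ℂ A ≤ spectralRadius ℂ (B.map (fun x : ℝ => (x : ℂ))) := by
  refine spectrum.spectralRadius_mono_of_nnnorm_pow_le fun k =>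
    linfty_opNNNorm_le_of_norm_apply_le fun i j => ?_
  rw [show B.map (fun x : ℝ => (x : ℂ)) = Complex.ofRealHom.mapMatrix B from rfl, ← map_pow,
    RingHom.mapMatrix_apply, map_apply, Complex.ofRealHom_eq_coe, Complex.norm_real,
    Real.norm_eq_abs]
  exact (norm_pow_apply_le_pow_apply h k i j).trans (le_abs_self _)

theorem spectralRadius_lt_of_norm_apply_lt {A : Matrix ι ι ℂ} {B : Matrix ι ι ℝ}
    (h : ∀ i j, ‖A i j‖ < B i j) (hB : spectralRadius ℂ (B.map (fun x : ℝ => (x : ℂ))) ≠ 0) :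
    spectralRadius ℂ A < spectralRadius ℂ (B.map (fun x : ℝ => (x : ℂ))) := by
  set ρB := spectralRadius ℂ (B.map (fun x : ℝ => (x : ℂ)))
  obtain ⟨t, ht0, ht1, hAt⟩ := Finite.exists_lt_one_forall_le_mul (ι := ι × ι)
    (f := fun p => ‖A p.1 p.2‖) (g := fun p => B p.1 p.2) fun p => h p.1 p.2
  have hscaled : spectralRadius ℂ A ≤ ‖(t : ℂ)‖₊ * ρB := by
    rw [← spectrum.spectralRadius_smul, ← map_smul' _ _ _ Complex.ofReal_mul]
    exact spectralRadius_le_of_norm_apply_le fun i j => hAt (i, j)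
  have ht : (‖(t : ℂ)‖₊ : ℝ≥0∞) < 1 := by
    rw [ENNReal.coe_lt_one_iff, ← NNReal.coe_lt_one, coe_nnnorm, Complex.norm_real,
      Real.norm_of_nonneg ht0]
    exact ht1
  calc spectralRadius ℂ A ≤ ‖(t : ℂ)‖₊ * ρB := hscaled
    _ < 1 * ρB := ENNReal.mul_lt_mul_left hB (spectrum.spectralRadius_lt_top _).ne ht
    _ = ρB := one_mul ρB

end LinftyOpNorm

end Matrix

theorem stmt10_general (n : ℕ)
    (A : Matrix (Fin n) (Fin n) ℂ) (B : Matrix (Fin n) (Fin n) ℝ)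
    (hAB : ∀ i j, ‖A i j‖ ≤ B i j) :
    spectralRadius ℂ A ≤ spectralRadius ℂ (B.map (fun x : ℝ => (x : ℂ))) ∧
    ((∀ i j, ‖A i j‖ < B i j) →
      spectralRadius ℂ (B.map (fun x : ℝ => (x : ℂ))) ≠ 0 →
      spectralRadius ℂ A < spectralRadius ℂ (B.map (fun x : ℝ => (x : ℂ)))) :=
  ⟨Matrix.spectralRadius_le_of_norm_apply_le hAB, Matrix.spectralRadius_lt_of_norm_apply_lt⟩

theorem stmt10 (n : ℕ) (hn : 0 < n)
    (A : Matrix (Fin n) (Fin n) ℂ) (B : Matrix (Fin n) (Fin n) ℝ)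
    (hB : ∀ i j, 0 ≤ B i j) (hAB : ∀ i j, ‖A i j‖ ≤ B i j) :
    spectralRadius ℂ A ≤ spectralRadius ℂ (B.map (fun x : ℝ => (x : ℂ))) ∧
    ((∀ i j, ‖A i j‖ < B i j) →
      spectralRadius ℂ (B.map (fun x : ℝ => (x : ℂ))) ≠ 0 →
      spectralRadius ℂ A < spectralRadius ℂ (B.map (fun x : ℝ => (x : ℂ)))) :=
  stmt10_general n A B hAB
end

section
/- Let A be an n × n complex matrix and B an n × n real matrix with nonnegative entries such that ‖A i j‖ ≤ B i j for all i, j. Suppose B is irreducible, meaning that for every pair of indices (i, j) there exists m ∈ ℕ with (B^m) i j > 0, and suppose there is at least one pair (i, j) with ‖A i j‖ < B i j. Then the spectral radius of A is strictly less than the spectral radius of B (viewed as a complex matrix via entrywise coercion). -/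
/-!
Let `C` be the matrix of absolute values of `A`, so `|A ^ k| ≤ C ^ k ≤ B ^ k` entrywise. Let `g`
be the gcd of the lengths of closed walks at `q` in the graph of `B`, where `‖A p q‖ < B p q`.
By irreducibility, all walk lengths between two fixed vertices are congruent modulo `g`, and every
large multiple of `g` is the length of a closed walk at `q`. Hence there is one exponent `m` such
that whenever some walk of length `m` joins `i` to `j`, another one passes through the edge
`p → q`; this gives `C ^ m ≤ t • B ^ m` for some `t < 1`. Then `|A ^ (m * k)| ≤ t ^ k • B ^ (m * k)`, and Gelfand's
formula yields `ρ(A) ^ m ≤ t * ρ(B) ^ m`, while `ρ(B) > 0` because some diagonal entry of a power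
of `B` is positive.
-/

open Filter Finset NNReal ENNReal

attribute [local instance] Matrix.linftyOpSeminormedAddCommGroup Matrix.linftyOpNormedRing
  Matrix.linftyOpNormedAlgebra

lemma ENNReal.coe_pow_rpow_one_div (r : ℝ≥0) {k : ℕ} (hk : k ≠ 0) :
    ((r ^ k : ℝ≥0) : ℝ≥0∞) ^ (1 / k : ℝ) = r := by
  rw [one_div, ENNReal.coe_pow, ENNReal.pow_rpow_inv_natCast hk]

section BanachAlgebra

variable {A : Type*} [NormedRing A] [NormedAlgebra ℂ A]

lemma spectralRadius_pow (a : A) {m : ℕ} (hm : m ≠ 0) :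
    spectralRadius ℂ (a ^ m) = spectralRadius ℂ a ^ m := by
  refine le_antisymm ?_ (spectrum.spectralRadius_pow_le a m hm)
  rw [spectralRadius, spectrum.map_pow_of_pos a (Nat.pos_of_ne_zero hm)]
  refine iSup₂_le fun _ ⟨z, hz, hzμ⟩ => ?_
  rw [← hzμ, nnnorm_pow, ENNReal.coe_pow]
  exact pow_le_pow_left' (le_iSup₂ (f := fun z (_ : z ∈ spectrum ℂ a) => (‖z‖₊ : ℝ≥0∞)) z hz) m

variable [CompleteSpace A]

lemma spectralRadius_le_mul_of_nnnorm_pow_le {a b : A} {t : ℝ≥0}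
    (h : ∀ k : ℕ, ‖a ^ k‖₊ ≤ t ^ k * ‖b ^ k‖₊) :
    spectralRadius ℂ a ≤ t * spectralRadius ℂ b := by
  refine le_of_tendsto_of_tendsto (spectrum.pow_nnnorm_pow_one_div_tendsto_nhds_spectralRadius a)
    (ENNReal.Tendsto.const_mul (spectrum.pow_nnnorm_pow_one_div_tendsto_nhds_spectralRadius b)
      (Or.inr ENNReal.coe_ne_top)) ?_
  filter_upwards [eventually_ne_atTop 0] with k hk
  calc (‖a ^ k‖₊ : ℝ≥0∞) ^ (1 / k : ℝ)
      ≤ ((t ^ k * ‖b ^ k‖₊ : ℝ≥0) : ℝ≥0∞) ^ (1 / k : ℝ) := by gcongr; exact h k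
    _ = t * (‖b ^ k‖₊ : ℝ≥0∞) ^ (1 / k : ℝ) := by
      rw [ENNReal.coe_mul, ENNReal.mul_rpow_of_nonneg _ _ (by positivity),
        ENNReal.coe_pow_rpow_one_div t hk]

lemma le_spectralRadius_of_pow_le_nnnorm_pow {a : A} {r : ℝ≥0}
    (h : ∀ k : ℕ, r ^ k ≤ ‖a ^ k‖₊) : (r : ℝ≥0∞) ≤ spectralRadius ℂ a := by
  refine ge_of_tendsto (spectrum.pow_nnnorm_pow_one_div_tendsto_nhds_spectralRadius a) ?_
  filter_upwards [eventually_ne_atTop 0] with k hk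
  rw [← ENNReal.coe_pow_rpow_one_div r hk]
  gcongr
  exact h k

end BanachAlgebra

namespace Matrix

section OrderedSemiring

variable {ι R : Type*} [Fintype ι] [Semiring R] [PartialOrder R] [IsOrderedRing R]
  {X Y X' Y' : Matrix ι ι R}

lemma mul_apply_le_mul_apply (hX : ∀ i j, 0 ≤ X i j) (hY : ∀ i j, 0 ≤ Y i j)
    (hXX' : ∀ i j, X i j ≤ X' i j) (hYY' : ∀ i j, Y i j ≤ Y' i j) (i j : ι) :
    (X * Y) i j ≤ (X' * Y') i j :=
  sum_le_sum fun l _ => mul_le_mul (hXX' i l) (hYY' l j) (hY l j) ((hX i l).trans (hXX' i l))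

lemma apply_mul_apply_le_mul_apply (hX : ∀ i j, 0 ≤ X i j) (hY : ∀ i j, 0 ≤ Y i j)
    (i l j : ι) : X i l * Y l j ≤ (X * Y) i j :=
  single_le_sum (fun l _ => mul_nonneg (hX i l) (hY l j)) (mem_univ l)

variable [DecidableEq ι]

lemma pow_apply_le_pow_apply (hX : ∀ i j, 0 ≤ X i j) (hXY : ∀ i j, X i j ≤ Y i j) (k : ℕ) :
    ∀ i j, (X ^ k) i j ≤ (Y ^ k) i j := by
  induction k with
  | zero => exact fun _ _ => le_rfl
  | succ k ih =>
    simp only [pow_succ]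
    exact mul_apply_le_mul_apply (pow_apply_nonneg hX k) hX ih hXY

lemma apply_pow_le_pow_apply (hX : ∀ i j, 0 ≤ X i j) (i : ι) (k : ℕ) :
    X i i ^ k ≤ (X ^ k) i i := by
  induction k with
  | zero => simp
  | succ k ih =>
    rw [pow_succ, pow_succ]
    exact (mul_le_mul_of_nonneg_right ih (hX i i)).trans
      (apply_mul_apply_le_mul_apply (pow_apply_nonneg hX k) hX i i i)

end OrderedSemiring

section StrictOrderedSemiring

variable {ι R : Type*} [Fintype ι] [DecidableEq ι] [Semiring R] [PartialOrder R]
  [IsStrictOrderedRing R] {B C : Matrix ι ι R}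

lemma pow_add_apply_pos (hB : ∀ i j, 0 ≤ B i j) {a b : ℕ} {i l j : ι}
    (ha : 0 < (B ^ a) i l) (hb : 0 < (B ^ b) l j) : 0 < (B ^ (a + b)) i j := by
  rw [pow_add]
  exact (mul_pos ha hb).trans_le
    (apply_mul_apply_le_mul_apply (pow_apply_nonneg hB a) (pow_apply_nonneg hB b) i l j)

lemma pow_apply_lt_pow_apply (hC : ∀ i j, 0 ≤ C i j) (hCB : ∀ i j, C i j ≤ B i j)
    {p q : ι} (hpq : C p q < B p q) {a b : ℕ} {i j : ι}
    (ha : 0 < (B ^ a) i p) (hb : 0 < (B ^ b) q j) :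
    (C ^ (a + 1 + b)) i j < (B ^ (a + 1 + b)) i j := by
  have hB : ∀ i j, 0 ≤ B i j := fun i j => (hC i j).trans (hCB i j)
  have hleft : ∀ i l, (C ^ (a + 1)) i l ≤ (B ^ a * C) i l := by
    rw [pow_succ]
    exact mul_apply_le_mul_apply (pow_apply_nonneg hC a) hC (pow_apply_le_pow_apply hC hCB a)
      (fun _ _ => le_rfl)
  have hmid : (B ^ a * C) i q < (B ^ a * B) i q :=
    sum_lt_sum (fun l _ => mul_le_mul_of_nonneg_left (hCB l q) (pow_apply_nonneg hB a i l))
      ⟨p, mem_univ p, mul_lt_mul_of_pos_left hpq ha⟩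
  calc (C ^ (a + 1 + b)) i j = (C ^ (a + 1) * C ^ b) i j := by rw [pow_add]
    _ ≤ (B ^ a * C * B ^ b) i j :=
      mul_apply_le_mul_apply (pow_apply_nonneg hC _) (pow_apply_nonneg hC b) hleft
        (pow_apply_le_pow_apply hC hCB b) i j
    _ < (B ^ a * B * B ^ b) i j :=
      sum_lt_sum (fun l _ => mul_le_mul_of_nonneg_right
          (mul_apply_le_mul_apply (pow_apply_nonneg hB a) hC (fun _ _ => le_rfl) hCB i l)
          (pow_apply_nonneg hB b l j))
        ⟨q, mem_univ q, mul_lt_mul_of_pos_right hmid hb⟩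
    _ = (B ^ (a + 1 + b)) i j := by rw [pow_add, pow_succ]

lemma exists_forall_ge_pow_apply_pos (hB : ∀ i j, 0 ≤ B i j) (q : ι) :
    ∃ N, ∀ ℓ ≥ N, Nat.setGcd {ℓ | 0 < (B ^ ℓ) q q} ∣ ℓ → 0 < (B ^ ℓ) q q := by
  obtain ⟨N, hN⟩ := Nat.exists_mem_closure_of_ge {ℓ | 0 < (B ^ ℓ) q q}
  exact ⟨N, fun ℓ hℓ hdvd => AddSubmonoid.closure_induction (fun _ h => h) (by simp)
    (fun _ _ _ _ => pow_add_apply_pos hB) (hN ℓ hℓ hdvd)⟩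

lemma setGcd_dvd_sub_of_pow_apply_pos (hB : ∀ i j, 0 ≤ B i j)
    (hirr : ∀ i j, ∃ m : ℕ, 0 < (B ^ m) i j) (q : ι) {i j : ι} {x y : ℕ}
    (hx : 0 < (B ^ x) i j) (hy : 0 < (B ^ y) i j) :
    Nat.setGcd {ℓ | 0 < (B ^ ℓ) q q} ∣ x - y := by
  obtain ⟨u, hu⟩ := hirr q i
  obtain ⟨w, hw⟩ := hirr j q
  have hx' := Nat.setGcd_dvd_of_mem (s := {ℓ | 0 < (B ^ ℓ) q q})
    (pow_add_apply_pos hB (pow_add_apply_pos hB hu hx) hw)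
  have hy' := Nat.setGcd_dvd_of_mem (s := {ℓ | 0 < (B ^ ℓ) q q})
    (pow_add_apply_pos hB (pow_add_apply_pos hB hu hy) hw)
  have hsub : u + x + w - (u + y + w) = x - y := by omega
  exact hsub ▸ Nat.dvd_sub hx' hy'

lemma exists_pow_apply_lt_pow_apply (hC : ∀ i j, 0 ≤ C i j) (hCB : ∀ i j, C i j ≤ B i j)
    (hirr : ∀ i j, ∃ m : ℕ, 0 < (B ^ m) i j) {p q : ι} (hpq : C p q < B p q) :
    ∃ m ≠ 0, ∀ i j, 0 < (B ^ m) i j → (C ^ m) i j < (B ^ m) i j := by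
  have hB : ∀ i j, 0 ≤ B i j := fun i j => (hC i j).trans (hCB i j)
  have hedge : 0 < (B ^ 1) p q := by rw [pow_one]; exact (hC p q).trans_lt hpq
  obtain ⟨N, hN⟩ := exists_forall_ge_pow_apply_pos hB q
  choose a ha using fun i => hirr i p
  choose b hb using fun j => hirr q j
  refine ⟨univ.sup a + 1 + univ.sup b + N, by omega, fun i j hij => ?_⟩
  have hai : a i ≤ univ.sup a := le_sup (mem_univ i)
  have hbj : b j ≤ univ.sup b := le_sup (mem_univ j)
  have hwalk : 0 < (B ^ (a i + 1 + b j)) i j :=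
    pow_add_apply_pos hB (pow_add_apply_pos hB (ha i) hedge) (hb j)
  -- the walk `i → p → q → j` and any walk `i → j` of length `m` differ by a multiple of the
  -- period, so the difference is the length of a closed walk at `q`
  have hloop := hN _ (by omega) (setGcd_dvd_sub_of_pow_apply_pos hB hirr q hij hwalk)
  have hlt := pow_apply_lt_pow_apply hC hCB hpq (ha i) (pow_add_apply_pos hB hloop (hb j))
  rwa [show a i + 1 + (univ.sup a + 1 + univ.sup b + N - (a i + 1 + b j) + b j) =
    univ.sup a + 1 + univ.sup b + N by omega] at hlt

end StrictOrderedSemiring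

lemma exists_lt_one_forall_apply_le_mul {m n : Type*} [Fintype m] [Fintype n]
    {X Y : Matrix m n ℝ} (hX : ∀ i j, 0 ≤ X i j) (hXY : ∀ i j, X i j ≤ Y i j)
    (hlt : ∀ i j, 0 < Y i j → X i j < Y i j) :
    ∃ t : ℝ≥0, t < 1 ∧ ∀ i j, X i j ≤ t * Y i j := by
  set t := univ.sup fun ij : m × n => (X ij.1 ij.2 / Y ij.1 ij.2).toNNReal
  have hle : ∀ i j, (X i j / Y i j).toNNReal ≤ t := fun i j =>
    le_sup (f := fun ij : m × n => (X ij.1 ij.2 / Y ij.1 ij.2).toNNReal) (mem_univ (i, j))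
  refine ⟨t, (Finset.sup_lt_iff one_pos).2 fun ⟨i, j⟩ _ => Real.toNNReal_lt_one.2 ?_,
    fun i j => ?_⟩ <;> rcases ((hX i j).trans (hXY i j)).eq_or_lt with hY | hY
  · simp [← hY]
  · exact (div_lt_one hY).2 (hlt i j hY)
  · simp [← hY, le_antisymm (hY ▸ hXY i j) (hX i j)]
  · calc X i j = X i j / Y i j * Y i j := (div_mul_cancel₀ _ hY.ne').symm
      _ ≤ t * Y i j := mul_le_mul_of_nonneg_right
        ((Real.le_coe_toNNReal _).trans (NNReal.coe_le_coe.2 (hle i j))) hY.le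

section LinftyOpNorm

variable {m n α : Type*} [Fintype m] [Fintype n] [SeminormedAddCommGroup α]

lemma nnnorm_apply_le_linfty_opNNNorm (X : Matrix m n α) (i : m) (j : n) :
    ‖X i j‖₊ ≤ ‖X‖₊ := by
  rw [linfty_opNNNorm_def]
  exact (single_le_sum (fun _ _ => zero_le) (mem_univ j)).trans
    (le_sup (f := fun i => ∑ j, ‖X i j‖₊) (mem_univ i))

lemma linfty_opNNNorm_le_mul_of_norm_apply_le {X Y : Matrix m n α} {c : ℝ≥0}
    (h : ∀ i j, ‖X i j‖ ≤ c * ‖Y i j‖) : ‖X‖₊ ≤ c * ‖Y‖₊ := by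
  rw [linfty_opNNNorm_def, linfty_opNNNorm_def]
  refine Finset.sup_le fun i _ => ?_
  calc ∑ j, ‖X i j‖₊ ≤ ∑ j, c * ‖Y i j‖₊ := sum_le_sum fun j _ => h i j
    _ = c * ∑ j, ‖Y i j‖₊ := (mul_sum ..).symm
    _ ≤ _ := by gcongr; exact le_sup (f := fun i => ∑ j, ‖Y i j‖₊) (mem_univ i)

end LinftyOpNorm

variable {ι : Type*} [Fintype ι] [DecidableEq ι]

lemma norm_pow_apply_le {𝕜 : Type*} [NormedRing 𝕜] [NormOneClass 𝕜] {A : Matrix ι ι 𝕜}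
    {C : Matrix ι ι ℝ} (hAC : ∀ i j, ‖A i j‖ ≤ C i j) (k : ℕ) (i j : ι) :
    ‖(A ^ k) i j‖ ≤ (C ^ k) i j := by
  have hC : ∀ i j, 0 ≤ C i j := fun i j => (norm_nonneg _).trans (hAC i j)
  induction k generalizing i j with
  | zero => by_cases h : i = j <;> simp [h]
  | succ k ih =>
    rw [pow_succ, pow_succ, mul_apply, mul_apply]
    refine (norm_sum_le _ _).trans (sum_le_sum fun l _ => ?_)
    exact (norm_mul_le _ _).trans
      (mul_le_mul (ih i l) (hAC l j) (norm_nonneg _) (pow_apply_nonneg hC k i l))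

lemma map_ofReal_pow (B : Matrix ι ι ℝ) (k : ℕ) :
    B.map (fun x : ℝ => (x : ℂ)) ^ k = (B ^ k).map (fun x : ℝ => (x : ℂ)) :=
  (Matrix.map_pow B Complex.ofRealHom k).symm

lemma linfty_opNNNorm_pow_le {A : Matrix ι ι ℂ} {B : Matrix ι ι ℝ} (hB : ∀ i j, 0 ≤ B i j)
    {t : ℝ≥0} (hAB : ∀ i j, ‖A i j‖ ≤ t * B i j) (k : ℕ) :
    ‖A ^ k‖₊ ≤ t ^ k * ‖B.map (fun x : ℝ => (x : ℂ)) ^ k‖₊ := by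
  refine linfty_opNNNorm_le_mul_of_norm_apply_le fun i j => ?_
  calc ‖(A ^ k) i j‖ ≤ (((t : ℝ) • B) ^ k) i j := norm_pow_apply_le hAB k i j
    _ = t ^ k * ‖(B.map (fun x : ℝ => (x : ℂ)) ^ k) i j‖ := by
      rw [smul_pow, map_ofReal_pow, smul_apply, map_apply, Complex.norm_real,
        Real.norm_of_nonneg (pow_apply_nonneg hB k i j), smul_eq_mul]

lemma spectralRadius_map_ofReal_ne_zero {B : Matrix ι ι ℝ} (hB : ∀ i j, 0 ≤ B i j) {l : ℕ}
    (hl : l ≠ 0) {q : ι} (hq : 0 < (B ^ l) q q) :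
    spectralRadius ℂ (B.map (fun x : ℝ => (x : ℂ))) ≠ 0 := by
  have hlower : (((B ^ l) q q).toNNReal : ℝ≥0∞) ≤
      spectralRadius ℂ (B.map (fun x : ℝ => (x : ℂ))) ^ l := by
    rw [← spectralRadius_pow _ hl]
    refine le_spectralRadius_of_pow_le_nnnorm_pow fun k => ?_
    refine le_trans ?_ (nnnorm_apply_le_linfty_opNNNorm _ q q)
    rw [← pow_mul, map_ofReal_pow, ← NNReal.coe_le_coe, NNReal.coe_pow, Real.coe_toNNReal _ hq.le,
      coe_nnnorm, map_apply, Complex.norm_real, Real.norm_of_nonneg (pow_apply_nonneg hB _ q q),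
      pow_mul]
    exact apply_pow_le_pow_apply (pow_apply_nonneg hB l) q k
  intro h0
  rw [h0, zero_pow hl, nonpos_iff_eq_zero, ENNReal.coe_eq_zero, Real.toNNReal_eq_zero] at hlower
  exact hlower.not_gt hq

end Matrix

open Matrix in
theorem stmt11_general (n : ℕ)
    (A : Matrix (Fin n) (Fin n) ℂ) (B : Matrix (Fin n) (Fin n) ℝ)
    (hB : ∀ i j, 0 ≤ B i j) (hAB : ∀ i j, ‖A i j‖ ≤ B i j)
    (hirr : ∀ i j, ∃ m : ℕ, 0 < (B ^ m) i j)
    (hlt : ∃ i j, ‖A i j‖ < B i j) :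
    spectralRadius ℂ A < spectralRadius ℂ (B.map (fun x : ℝ => (x : ℂ))) := by
  set C : Matrix (Fin n) (Fin n) ℝ := of fun i j => ‖A i j‖
  have hC : ∀ i j, 0 ≤ C i j := fun i j => norm_nonneg (A i j)
  obtain ⟨p, q, hpq⟩ := hlt
  have : Nonempty (Fin n) := ⟨p⟩
  obtain ⟨m, hm, hCB⟩ := exists_pow_apply_lt_pow_apply hC hAB hirr hpq
  obtain ⟨t, ht, hCt⟩ := exists_lt_one_forall_apply_le_mul (pow_apply_nonneg hC m)
    (pow_apply_le_pow_apply hC hAB m) hCB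
  have hAm : ∀ i j, ‖(A ^ m) i j‖ ≤ t * (B ^ m) i j := fun i j =>
    (norm_pow_apply_le (C := C) (fun _ _ => le_rfl) m i j).trans (hCt i j)
  have hρ := spectralRadius_le_mul_of_nnnorm_pow_le
    (linfty_opNNNorm_pow_le (pow_apply_nonneg hB m) hAm)
  rw [← map_ofReal_pow, spectralRadius_pow _ hm, spectralRadius_pow _ hm] at hρ
  have hρ0 : spectralRadius ℂ (B.map (fun x : ℝ => (x : ℂ))) ≠ 0 := by
    obtain ⟨c, hc⟩ := hirr q p
    exact spectralRadius_map_ofReal_ne_zero hB c.succ_ne_zero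
      (pow_add_apply_pos hB hc (by rw [pow_one]; exact (norm_nonneg _).trans_lt hpq))
  have hρtop : spectralRadius ℂ (B.map (fun x : ℝ => (x : ℂ))) ≠ ⊤ :=
    ((spectrum.spectralRadius_le_nnnorm _).trans_lt ENNReal.coe_lt_top).ne
  refine (ENNReal.pow_lt_pow_left_iff hm).1 (hρ.trans_lt ?_)
  simpa using ENNReal.mul_lt_mul_left (pow_ne_zero m hρ0) (ENNReal.pow_ne_top hρtop)
    (show (t : ℝ≥0∞) < 1 by exact_mod_cast ht)

theorem stmt11 (n : ℕ) (hn : 0 < n)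
    (A : Matrix (Fin n) (Fin n) ℂ) (B : Matrix (Fin n) (Fin n) ℝ)
    (hB : ∀ i j, 0 ≤ B i j) (hAB : ∀ i j, ‖A i j‖ ≤ B i j)
    (hirr : ∀ i j, ∃ m : ℕ, 0 < (B ^ m) i j)
    (hlt : ∃ i j, ‖A i j‖ < B i j) :
    spectralRadius ℂ A < spectralRadius ℂ (B.map (fun x : ℝ => (x : ℂ))) :=
  stmt11_general n A B hB hAB hirr hlt
end

section
/- Let B be an n × n real matrix with nonnegative entries which is irreducible, meaning that for every pair of indices (i, j) there exists m ∈ ℕ with (B^m) i j > 0. Assume that 1 is an eigenvalue of B and that the spectral radius of B (viewed as a complex matrix via entrywise coercion) equals 1. Then the adjugate matrix of (1 − B) (where 1 denotes the identity matrix) has either all its entries strictly positive or all its entries strictly negative. -/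
/-!
Write `A = 1 - B`. A nonnegative `u ≠ 0` with `u ≤ B u` must satisfy `B u = u`: otherwise the
matrix `S = ∑_{k<N} B ^ k`, which has positive entries by irreducibility, turns the defect
`B u - u` into a positive vector `w = S u` with `w < B w` entrywise, and Gelfand's formula then
gives `ρ(B) > 1`. Applied to `|v|` for a fixed vector `v`, this yields positive fixed vectors
`w` of `B` and `w'` of `Bᵀ`, and irreducibility makes both fixed spaces one-dimensional.
Since `A * adj A = adj A * A = det A • 1 = 0`, the columns of `adj A` are multiples of `w` and
its rows multiples of `w'`, so `adj A = α • w w'ᵀ`. Finally `α ≠ 0`: if the cofactor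
`adj A i i` vanished, a kernel vector of `A` with `i`-th row replaced by `eᵢ` would be a vector
in `ker A = ℝ w` with vanishing `i`-th entry.
-/

open Matrix Filter Topology Finset

theorem spectrum.ofReal_le_spectralRadius_of_le_norm_pow {A : Type*} [NormedRing A]
    [NormedAlgebra ℂ A] [CompleteSpace A] (a : A) {c δ : ℝ} (hc : 0 ≤ c) (hδ : 0 < δ)
    (h : ∀ m : ℕ, δ * c ^ m ≤ ‖a ^ m‖) : ENNReal.ofReal c ≤ spectralRadius ℂ a := by
  have hδroot : Tendsto (fun m : ℕ => δ ^ (1 / m : ℝ)) atTop (𝓝 1) := by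
    simpa only [Real.rpow_zero, Function.comp_def] using
      (Real.continuousAt_const_rpow hδ.ne').tendsto.comp
        (tendsto_one_div_atTop_nhds_zero_nat (𝕜 := ℝ))
  have hroot : Tendsto (fun m : ℕ => (δ * c ^ m) ^ (1 / m : ℝ)) atTop (𝓝 c) := by
    refine (one_mul c ▸ hδroot.mul_const c).congr' ?_
    filter_upwards [eventually_ne_atTop 0] with m hm
    rw [Real.mul_rpow hδ.le (by positivity), one_div, Real.pow_rpow_inv_natCast hc hm]
  refine le_of_tendsto_of_tendsto' (ENNReal.tendsto_ofReal hroot)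
    (spectrum.pow_norm_pow_one_div_tendsto_nhds_spectralRadius a) fun m => ?_
  gcongr
  exact h m

namespace Matrix

variable {ι : Type*} [Fintype ι]

lemma mulVec_mono_of_nonneg {B : Matrix ι ι ℝ} (hB : ∀ i j, 0 ≤ B i j) {x y : ι → ℝ}
    (hxy : x ≤ y) : B *ᵥ x ≤ B *ᵥ y := fun i =>
  sum_le_sum fun j _ => mul_le_mul_of_nonneg_left (hxy j) (hB i j)

lemma abs_mulVec_le {B : Matrix ι ι ℝ} (hB : ∀ i j, 0 ≤ B i j) (x : ι → ℝ) :
    |B *ᵥ x| ≤ B *ᵥ |x| := fun i => by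
  simpa [mulVec, dotProduct, abs_mul, abs_of_nonneg (hB i _)] using
    abs_sum_le_sum_abs (fun j => B i j * x j) univ

lemma mulVec_pos_of_pos {P : Matrix ι ι ℝ} (hP : ∀ i j, 0 < P i j) {x : ι → ℝ} (hx : 0 ≤ x)
    (hx0 : x ≠ 0) (i : ι) : 0 < (P *ᵥ x) i := by
  obtain ⟨j, hj⟩ := Function.ne_iff.mp hx0
  exact sum_pos' (fun k _ => mul_nonneg (hP i k).le (hx k))
    ⟨j, mem_univ j, mul_pos (hP i j) ((hx j).lt_of_ne' hj)⟩

lemma exists_eq_smul_vecMulVec {K m n : Type*} [Field K] {X : Matrix m n K} {w : m → K}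
    {w' : n → K} (hcol : ∀ j, ∃ a : K, X.col j = a • w) {i₀ : m} (hw : w i₀ ≠ 0)
    (hrow : ∃ s : K, X i₀ = s • w') : ∃ α : K, X = α • vecMulVec w w' := by
  choose a ha using hcol
  obtain ⟨s, hs⟩ := hrow
  refine ⟨s / w i₀, ext fun i j => ?_⟩
  have hij : X i j = a j * w i := congrFun (ha j) i
  have hi₀j : X i₀ j = a j * w i₀ := congrFun (ha j) i₀
  have hi₀j' : X i₀ j = s * w' j := congrFun hs j
  rw [smul_apply, vecMulVec_apply, smul_eq_mul, hij]
  field_simp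
  linear_combination w i * (hi₀j' - hi₀j)

variable [DecidableEq ι]

lemma one_sub_mulVec_eq_zero_iff {R : Type*} [Ring R] {B : Matrix ι ι R} {z : ι → R} :
    (1 - B) *ᵥ z = 0 ↔ B *ᵥ z = z := by
  rw [sub_mulVec, one_mulVec, sub_eq_zero, eq_comm]

lemma vecMul_one_sub_eq_zero_iff {R : Type*} [Ring R] {B : Matrix ι ι R} {z : ι → R} :
    z ᵥ* (1 - B) = 0 ↔ z ᵥ* B = z := by
  rw [vecMul_sub, vecMul_one, sub_eq_zero, eq_comm]

lemma mulVec_col_adjugate_eq_zero {R : Type*} [CommRing R] {A : Matrix ι ι R} (hA : A.det = 0)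
    (j : ι) : A *ᵥ A.adjugate.col j = 0 := by
  rw [← mulVec_single_one, mulVec_mulVec, mul_adjugate, hA, zero_smul, zero_mulVec]

lemma adjugate_vecMul_eq_zero {R : Type*} [CommRing R] {A : Matrix ι ι R} (hA : A.det = 0) (i : ι) :
    A.adjugate i ᵥ* A = 0 := by
  rw [← mul_apply_eq_vecMul, adjugate_mul, hA, zero_smul]
  rfl

lemma adjugate_apply_self_ne_zero {K : Type*} [Field K] {A : Matrix ι ι K} {w w' : ι → K}
    (hker : ∀ z, A *ᵥ z = 0 → ∃ t : K, z = t • w) (hw' : w' ᵥ* A = 0) {i : ι} (hwi : w i ≠ 0)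
    (hw'i : w' i ≠ 0) : A.adjugate i i ≠ 0 := by
  rw [adjugate_apply]
  intro hdet
  obtain ⟨z, hz0, hz⟩ := exists_mulVec_eq_zero_iff.mpr hdet
  rw [updateRow_mulVec] at hz
  have hzi : z i = 0 := by simpa using congrFun hz i
  have hAz_single : A *ᵥ z = Pi.single i ((A *ᵥ z) i) := by
    funext k
    by_cases hk : k = i
    · subst hk; simp
    · simpa [hk] using congrFun hz k
  have hAz : A *ᵥ z = 0 := by
    have h : w' ⬝ᵥ (A *ᵥ z) = 0 := by rw [dotProduct_mulVec, hw', zero_dotProduct]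
    rw [hAz_single, dotProduct_single, mul_eq_zero, or_iff_right hw'i] at h
    rw [hAz_single, h, Pi.single_zero]
  obtain ⟨t, rfl⟩ := hker z hAz
  have ht : t = 0 := by simpa [hwi] using hzi
  exact hz0 (by rw [ht, zero_smul])

lemma spectrum_transpose {R : Type*} [CommRing R] (M : Matrix ι ι R) :
    spectrum R Mᵀ = spectrum R M := by
  ext; simp [mem_spectrum_iff_not_isUnit_eval_charpoly, charpoly_transpose]

lemma spectralRadius_transpose {𝕜 : Type*} [NormedField 𝕜] (M : Matrix ι ι 𝕜) :
    spectralRadius 𝕜 Mᵀ = spectralRadius 𝕜 M := by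
  rw [spectralRadius, spectralRadius, spectrum_transpose]

section NonnegMatrix

variable {B : Matrix ι ι ℝ}

lemma pow_smul_le_pow_mulVec (hB : ∀ i j, 0 ≤ B i j) {c : ℝ} (hc : 0 ≤ c) {w : ι → ℝ}
    (hw : c • w ≤ B *ᵥ w) (m : ℕ) : c ^ m • w ≤ B ^ m *ᵥ w := by
  induction m with
  | zero => simp
  | succ m ih =>
    calc c ^ (m + 1) • w = c ^ m • c • w := by rw [pow_succ, mul_smul]
      _ ≤ c ^ m • (B *ᵥ w) := smul_le_smul_of_nonneg_left hw (pow_nonneg hc m)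
      _ = B *ᵥ (c ^ m • w) := (mulVec_smul B _ w).symm
      _ ≤ B *ᵥ (B ^ m *ᵥ w) := mulVec_mono_of_nonneg hB ih
      _ = B ^ (m + 1) *ᵥ w := by rw [mulVec_mulVec, pow_succ']

section LinftyOpNorm

attribute [local instance] Matrix.linftyOpNormedRing Matrix.linftyOpNormedAlgebra

lemma linfty_opNorm_map_ofReal (M : Matrix ι ι ℝ) : ‖M.map ((↑) : ℝ → ℂ)‖ = ‖M‖ := by
  simp [linfty_opNorm_def]

lemma ofReal_le_spectralRadius_of_smul_le_mulVec [Nonempty ι] (hB : ∀ i j, 0 ≤ B i j)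
    {w : ι → ℝ} (hw : ∀ i, 0 < w i) {c : ℝ} (hc : 0 ≤ c) (hcw : c • w ≤ B *ᵥ w) :
    ENNReal.ofReal c ≤ spectralRadius ℂ (B.map ((↑) : ℝ → ℂ)) := by
  have : CompleteSpace (Matrix ι ι ℂ) := FiniteDimensional.complete ℂ _
  obtain ⟨i⟩ := ‹Nonempty ι›
  have hwnorm : 0 < ‖w‖ := norm_pos_iff.mpr fun h => (hw i).ne' (congrFun h i)
  refine spectrum.ofReal_le_spectralRadius_of_le_norm_pow _ hc (div_pos (hw i) hwnorm) fun m => ?_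
  have hpow : B.map ((↑) : ℝ → ℂ) ^ m = (B ^ m).map ((↑) : ℝ → ℂ) :=
    (Matrix.map_pow B Complex.ofRealHom m).symm
  rw [hpow, linfty_opNorm_map_ofReal, div_mul_eq_mul_div, div_le_iff₀ hwnorm, mul_comm]
  calc c ^ m * w i ≤ (B ^ m *ᵥ w) i := pow_smul_le_pow_mulVec hB hc hcw m i
    _ ≤ ‖B ^ m *ᵥ w‖ := (Real.le_norm_self _).trans (norm_le_pi_norm _ i)
    _ ≤ ‖B ^ m‖ * ‖w‖ := linfty_opNorm_mulVec _ _

end LinftyOpNorm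

lemma ofReal_lt_spectralRadius_of_lt_mulVec [Nonempty ι] (hB : ∀ i j, 0 ≤ B i j)
    {w : ι → ℝ} (hw : ∀ i, 0 < w i) {r : ℝ} (hr : 0 ≤ r) (hrw : ∀ i, r * w i < (B *ᵥ w) i) :
    ENNReal.ofReal r < spectralRadius ℂ (B.map ((↑) : ℝ → ℂ)) := by
  obtain ⟨c, hcw, hrc⟩ : ∃ c, (∀ i, c * w i < (B *ᵥ w) i) ∧ r < c := by
    have : ∀ᶠ c in 𝓝 r, ∀ i, c * w i < (B *ᵥ w) i := eventually_all.2 fun i =>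
      (continuous_mul_const (w i)).continuousAt.eventually_lt continuousAt_const (hrw i)
    exact ((this.filter_mono nhdsWithin_le_nhds).and
      (self_mem_nhdsWithin : Set.Ioi r ∈ 𝓝[>] r)).exists
  calc ENNReal.ofReal r < ENNReal.ofReal c :=
        (ENNReal.ofReal_lt_ofReal_iff (hr.trans_lt hrc)).2 hrc
    _ ≤ _ := ofReal_le_spectralRadius_of_smul_le_mulVec hB hw (hr.trans hrc.le) fun i =>
        (hcw i).le

lemma exists_sum_pow_pos (hB : ∀ i j, 0 ≤ B i j) (hirr : ∀ i j, ∃ m : ℕ, 0 < (B ^ m) i j) :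
    ∃ N : ℕ, ∀ i j, 0 < (∑ k ∈ range N, B ^ k) i j := by
  choose m hm using hirr
  refine ⟨univ.sup (fun p : ι × ι => m p.1 p.2) + 1, fun i j => ?_⟩
  rw [sum_apply]
  refine (hm i j).trans_le (single_le_sum (fun k _ => pow_apply_nonneg hB k i j) ?_)
  exact mem_range_succ_iff.mpr (le_sup (f := fun p : ι × ι => m p.1 p.2) (mem_univ (i, j)))

theorem exists_pos_mulVec_eq_self (hB : ∀ i j, 0 ≤ B i j)
    (hirr : ∀ i j, ∃ m : ℕ, 0 < (B ^ m) i j) (hρ : spectralRadius ℂ (B.map ((↑) : ℝ → ℂ)) ≤ 1)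
    {v : ι → ℝ} (hv : v ≠ 0) (hBv : B *ᵥ v = v) :
    ∃ w : ι → ℝ, (∀ i, 0 < w i) ∧ B *ᵥ w = w := by
  have : Nonempty ι := let ⟨i, _⟩ := Function.ne_iff.mp hv; ⟨i⟩
  obtain ⟨N, hN⟩ := exists_sum_pow_pos hB hirr
  set S := ∑ k ∈ range N, B ^ k
  have hBS : ∀ x, B *ᵥ (S *ᵥ x) = S *ᵥ (B *ᵥ x) := fun x => by
    rw [mulVec_mulVec, mulVec_mulVec, (Commute.sum_right _ _ _ fun k _ => Commute.self_pow B k).eq]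
  set u := |v|
  have hu : u ≤ B *ᵥ u := by simpa only [hBv] using abs_mulVec_le hB v
  have hu0 : u ≠ 0 := fun h => hv (funext fun i => abs_eq_zero.mp (congrFun h i))
  have hSu := mulVec_pos_of_pos hN (abs_nonneg v) hu0
  refine ⟨S *ᵥ u, hSu, ?_⟩
  by_contra hne
  have hgrowth : ∀ i, (S *ᵥ u) i < (B *ᵥ (S *ᵥ u)) i := fun i => by
    have hz : B *ᵥ u - u ≠ 0 := fun h => hne (by rw [hBS, sub_eq_zero.mp h])
    have := mulVec_pos_of_pos hN (sub_nonneg.mpr hu) hz i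
    rwa [mulVec_sub, ← hBS, Pi.sub_apply, sub_pos] at this
  have := ofReal_lt_spectralRadius_of_lt_mulVec hB hSu zero_le_one fun i => by
    simpa using hgrowth i
  rw [ENNReal.ofReal_one] at this
  exact this.not_ge hρ

lemma eq_zero_of_mulVec_eq_self_of_apply_eq_zero (hB : ∀ i j, 0 ≤ B i j)
    (hirr : ∀ i j, ∃ m : ℕ, 0 < (B ^ m) i j) {y : ι → ℝ} (hy : 0 ≤ y) (hBy : B *ᵥ y = y)
    {i : ι} (hyi : y i = 0) : y = 0 := by
  have hfix (m : ℕ) : B ^ m *ᵥ y = y := by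
    induction m with
    | zero => simp
    | succ m ih => rw [pow_succ', ← mulVec_mulVec, ih, hBy]
  funext j
  obtain ⟨m, hm⟩ := hirr i j
  have hle : (B ^ m) i j * y j ≤ (B ^ m) i j * 0 := by
    calc (B ^ m) i j * y j ≤ ∑ k, (B ^ m) i k * y k :=
          single_le_sum (fun k _ => mul_nonneg (pow_apply_nonneg hB m i k) (hy k)) (mem_univ j)
      _ = (B ^ m) i j * 0 := by rw [mul_zero, ← hyi, ← congrFun (hfix m) i]; rfl
  exact le_antisymm (le_of_mul_le_mul_left hle hm) (hy j)

theorem eq_smul_of_mulVec_eq_self (hB : ∀ i j, 0 ≤ B i j)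
    (hirr : ∀ i j, ∃ m : ℕ, 0 < (B ^ m) i j) {w : ι → ℝ} (hw : ∀ i, 0 < w i) (hBw : B *ᵥ w = w)
    {x : ι → ℝ} (hBx : B *ᵥ x = x) : ∃ t : ℝ, x = t • w := by
  cases isEmpty_or_nonempty ι
  · exact ⟨0, Subsingleton.elim _ _⟩
  obtain ⟨i, hi⟩ := Finite.exists_min fun i => x i / w i
  refine ⟨x i / w i, sub_eq_zero.mp (eq_zero_of_mulVec_eq_self_of_apply_eq_zero hB hirr
    (i := i) (fun j => ?_) ?_ ?_)⟩
  · simpa [← le_div_iff₀ (hw j)] using hi j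
  · rw [mulVec_sub, mulVec_smul, hBx, hBw]
  · simp [div_mul_cancel₀ _ (hw i).ne']

lemma exists_pow_apply_pos_transpose (hirr : ∀ i j, ∃ m : ℕ, 0 < (B ^ m) i j) :
    ∀ i j, ∃ m : ℕ, 0 < (Bᵀ ^ m) i j := fun i j =>
  (hirr j i).imp fun m hm => by rwa [← transpose_pow]

theorem exists_pos_vecMul_eq_self (hB : ∀ i j, 0 ≤ B i j)
    (hirr : ∀ i j, ∃ m : ℕ, 0 < (B ^ m) i j) (hρ : spectralRadius ℂ (B.map ((↑) : ℝ → ℂ)) ≤ 1)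
    {v : ι → ℝ} (hv : v ≠ 0) (hvB : v ᵥ* B = v) :
    ∃ w : ι → ℝ, (∀ i, 0 < w i) ∧ w ᵥ* B = w := by
  simp_rw [← mulVec_transpose] at hvB ⊢
  exact exists_pos_mulVec_eq_self (fun i j => hB j i) (exists_pow_apply_pos_transpose hirr)
    (by rwa [transpose_map, spectralRadius_transpose]) hv hvB

theorem eq_smul_of_vecMul_eq_self (hB : ∀ i j, 0 ≤ B i j)
    (hirr : ∀ i j, ∃ m : ℕ, 0 < (B ^ m) i j) {w : ι → ℝ} (hw : ∀ i, 0 < w i) (hwB : w ᵥ* B = w)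
    {x : ι → ℝ} (hxB : x ᵥ* B = x) : ∃ t : ℝ, x = t • w := by
  rw [← mulVec_transpose] at hwB hxB
  exact eq_smul_of_mulVec_eq_self (fun i j => hB j i) (exists_pow_apply_pos_transpose hirr) hw
    hwB hxB

end NonnegMatrix

end Matrix

theorem stmt12_general (n : ℕ) (B : Matrix (Fin n) (Fin n) ℝ)
    (hB : ∀ i j, 0 ≤ B i j)
    (hirr : ∀ i j, ∃ m : ℕ, 0 < (B ^ m) i j)
    (heig : ∃ v : Fin n → ℝ, v ≠ 0 ∧ B.mulVec v = v)
    (hρ : spectralRadius ℂ (B.map (fun x : ℝ => (x : ℂ))) = 1) :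
    (∀ i j, 0 < (1 - B).adjugate i j) ∨ (∀ i j, (1 - B).adjugate i j < 0) := by
  obtain ⟨v, hv, hBv⟩ := heig
  obtain ⟨i₀, -⟩ := Function.ne_iff.mp hv
  have hdet : (1 - B).det = 0 :=
    exists_mulVec_eq_zero_iff.mp ⟨v, hv, one_sub_mulVec_eq_zero_iff.mpr hBv⟩
  obtain ⟨v', hv', hv'B⟩ := exists_vecMul_eq_zero_iff.mpr hdet
  obtain ⟨w, hw, hBw⟩ := exists_pos_mulVec_eq_self hB hirr hρ.le hv hBv
  obtain ⟨w', hw', hw'B⟩ :=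
    exists_pos_vecMul_eq_self hB hirr hρ.le hv' (vecMul_one_sub_eq_zero_iff.mp hv'B)
  have hker (z) (hz : (1 - B) *ᵥ z = 0) : ∃ t : ℝ, z = t • w :=
    eq_smul_of_mulVec_eq_self hB hirr hw hBw (one_sub_mulVec_eq_zero_iff.mp hz)
  have hker' (z) (hz : z ᵥ* (1 - B) = 0) : ∃ t : ℝ, z = t • w' :=
    eq_smul_of_vecMul_eq_self hB hirr hw' hw'B (vecMul_one_sub_eq_zero_iff.mp hz)
  obtain ⟨α, hα⟩ :=
    exists_eq_smul_vecMulVec (fun j => hker _ (mulVec_col_adjugate_eq_zero hdet j)) (hw i₀).ne'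
      (hker' _ (adjugate_vecMul_eq_zero hdet i₀))
  have hα0 : α ≠ 0 := by
    rintro rfl
    refine adjugate_apply_self_ne_zero hker (vecMul_one_sub_eq_zero_iff.mpr hw'B) (hw i₀).ne'
      (hw' i₀).ne' ?_
    rw [hα, zero_smul, Matrix.zero_apply]
  have hentry (i j) : (1 - B).adjugate i j = α * (w i * w' j) := by
    rw [hα, Matrix.smul_apply, vecMulVec_apply, smul_eq_mul]
  rcases hα0.lt_or_gt with hneg | hpos
  · exact .inr fun i j => hentry i j ▸ mul_neg_of_neg_of_pos hneg (mul_pos (hw i) (hw' j))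
  · exact .inl fun i j => hentry i j ▸ mul_pos hpos (mul_pos (hw i) (hw' j))

theorem stmt12 (n : ℕ) (hn : 0 < n) (B : Matrix (Fin n) (Fin n) ℝ)
    (hB : ∀ i j, 0 ≤ B i j)
    (hirr : ∀ i j, ∃ m : ℕ, 0 < (B ^ m) i j)
    (heig : ∃ v : Fin n → ℝ, v ≠ 0 ∧ B.mulVec v = v)
    (hρ : spectralRadius ℂ (B.map (fun x : ℝ => (x : ℂ))) = 1) :
    (∀ i j, 0 < (1 - B).adjugate i j) ∨ (∀ i j, (1 - B).adjugate i j < 0) :=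
  stmt12_general n B hB hirr heig hρ
end

section
/- Let n ≥ 1, let a : (Fin n → ℕ) → ℝ with a k ≥ 0 for all k, and assume that for every z : Fin n → ℝ with 0 ≤ z i < 1 for all i, the family k ↦ a k · ∏_i (z i)^(k i) is summable. Let Z : ℝ → (Fin n → ℝ) be continuous on [0,1] with Z 1 = (1,…,1) and 0 ≤ (Z t) i < 1 for all t ∈ [0,1) and all i, and define f(t) = ∑'_k a k · ∏_i ((Z t) i)^(k i) for t ∈ [0,1). If f(t) tends to a finite limit L as t → 1 within [0,1), then the family a is summable and ∑'_k a k = L. -/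
/-! Along a path approaching the corner `(1, …, 1)`, every monomial weight `∏ i, (Z t i) ^ (k i)`
lies in `[0, 1]` and tends to `1`. Hence each finite partial sum of `a` is a limit of numbers
bounded by the power series values, so it is at most `L`, which gives summability and
`∑' k, a k ≤ L`; conversely the power series values are bounded by `∑' k, a k`. -/

open Filter Topology

section WeightedSums

variable {α ι : Type*} {l : Filter α} {a : ι → ℝ} {w : α → ι → ℝ} {L : ℝ}

theorem sum_le_of_tendsto_weighted_tsum [l.NeBot] (ha : ∀ k, 0 ≤ a k)
    (hw : ∀ᶠ t in l, (∀ k, 0 ≤ w t k) ∧ Summable (fun k => a k * w t k))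
    (hw1 : ∀ k, Tendsto (fun t => w t k) l (𝓝 1))
    (hL : Tendsto (fun t => ∑' k, a k * w t k) l (𝓝 L)) (F : Finset ι) :
    ∑ k ∈ F, a k ≤ L := by
  have hF : Tendsto (fun t => ∑ k ∈ F, a k * w t k) l (𝓝 (∑ k ∈ F, a k)) := by
    simpa using tendsto_finsetSum F fun k _ => (hw1 k).const_mul (a k)
  refine le_of_tendsto_of_tendsto hF hL ?_
  filter_upwards [hw] with t ⟨hw0, hsum⟩
  exact hsum.sum_le_tsum F fun k _ => mul_nonneg (ha k) (hw0 k)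

theorem summable_and_tsum_eq_of_tendsto_weighted_tsum [l.NeBot] (ha : ∀ k, 0 ≤ a k)
    (hw : ∀ᶠ t in l, (∀ k, 0 ≤ w t k ∧ w t k ≤ 1) ∧ Summable (fun k => a k * w t k))
    (hw1 : ∀ k, Tendsto (fun t => w t k) l (𝓝 1))
    (hL : Tendsto (fun t => ∑' k, a k * w t k) l (𝓝 L)) :
    Summable a ∧ ∑' k, a k = L := by
  have hpartial := sum_le_of_tendsto_weighted_tsum ha
    (hw.mono fun t ht => ⟨fun k => (ht.1 k).1, ht.2⟩) hw1 hL
  have hS : Summable a := summable_of_sum_le ha hpartial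
  refine ⟨hS, le_antisymm (hS.tsum_le_of_sum_le hpartial) ?_⟩
  refine le_of_tendsto_of_tendsto hL tendsto_const_nhds ?_
  filter_upwards [hw] with t ⟨hw01, hsum⟩
  exact hsum.tsum_le_tsum (fun k => mul_le_of_le_one_right (ha k) (hw01 k).2) hS

end WeightedSums

theorem prod_pow_mem_Icc_of_mem_Icc {n : ℕ} {z : Fin n → ℝ} (hz : ∀ i, 0 ≤ z i ∧ z i < 1)
    (k : Fin n → ℕ) : 0 ≤ ∏ i, z i ^ k i ∧ ∏ i, z i ^ k i ≤ 1 :=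
  ⟨Finset.prod_nonneg fun i _ => pow_nonneg (hz i).1 _,
    Finset.prod_le_one (fun i _ => pow_nonneg (hz i).1 _)
      fun i _ => pow_le_one₀ (hz i).1 (hz i).2.le⟩

theorem stmt13_general (n : ℕ) (a : (Fin n → ℕ) → ℝ) (ha : ∀ k, 0 ≤ a k)
    (hsum : ∀ z : Fin n → ℝ, (∀ i, 0 ≤ z i ∧ z i < 1) →
      Summable (fun k : Fin n → ℕ => a k * ∏ i, (z i) ^ (k i)))
    (Z : ℝ → (Fin n → ℝ)) (hZcont : ContinuousOn Z (Set.Icc (0 : ℝ) 1))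
    (hZ1 : Z 1 = fun _ => 1)
    (hZlt : ∀ t ∈ Set.Ico (0 : ℝ) 1, ∀ i, 0 ≤ Z t i ∧ Z t i < 1)
    (L : ℝ)
    (hlim : Filter.Tendsto
      (fun t => ∑' k : Fin n → ℕ, a k * ∏ i, (Z t i) ^ (k i))
      (nhdsWithin 1 (Set.Ico (0 : ℝ) 1)) (nhds L)) :
    Summable a ∧ ∑' k, a k = L := by
  have := right_nhdsWithin_Ico_neBot (zero_lt_one' ℝ)
  have hZt : Tendsto Z (𝓝[Set.Ico 0 1] 1) (𝓝 fun _ => 1) := hZ1 ▸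
    (hZcont 1 (Set.right_mem_Icc.mpr zero_le_one)).mono_left
      (nhdsWithin_mono _ Set.Ico_subset_Icc_self)
  have hmonomial (k : Fin n → ℕ) :
      Tendsto (fun t => ∏ i, Z t i ^ k i) (𝓝[Set.Ico 0 1] 1) (𝓝 1) := by
    simpa using tendsto_finsetProd Finset.univ fun i _ =>
      ((continuous_apply i).tendsto _).comp hZt |>.pow (k i)
  refine summable_and_tsum_eq_of_tendsto_weighted_tsum ha ?_ hmonomial hlim
  filter_upwards [self_mem_nhdsWithin] with t ht
  exact ⟨prod_pow_mem_Icc_of_mem_Icc (hZlt t ht), hsum _ (hZlt t ht)⟩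

theorem stmt13 (n : ℕ) (hn : 1 ≤ n) (a : (Fin n → ℕ) → ℝ) (ha : ∀ k, 0 ≤ a k)
    (hsum : ∀ z : Fin n → ℝ, (∀ i, 0 ≤ z i ∧ z i < 1) →
      Summable (fun k : Fin n → ℕ => a k * ∏ i, (z i) ^ (k i)))
    (Z : ℝ → (Fin n → ℝ)) (hZcont : ContinuousOn Z (Set.Icc (0 : ℝ) 1))
    (hZ1 : Z 1 = fun _ => 1)
    (hZlt : ∀ t ∈ Set.Ico (0 : ℝ) 1, ∀ i, 0 ≤ Z t i ∧ Z t i < 1)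
    (L : ℝ)
    (hlim : Filter.Tendsto
      (fun t => ∑' k : Fin n → ℕ, a k * ∏ i, (Z t i) ^ (k i))
      (nhdsWithin 1 (Set.Ico (0 : ℝ) 1)) (nhds L)) :
    Summable a ∧ ∑' k, a k = L :=
  stmt13_general n a ha hsum Z hZcont hZ1 hZlt L hlim
end

section
/- Let n ≥ 1, let P and Q be multivariate complex polynomials in variables indexed by Fin n, and let a : (Fin n → ℕ) → ℝ with a k ≥ 0 for all k. Assume there exists r > 0 such that for every z : Fin n → ℂ with ‖z i‖ < r for all i: the family k ↦ a k · ∏_i (z i)^(k i) is absolutely summable, Q evaluated at z is nonzero, and (∑'_k a k · ∏_i (z i)^(k i)) · Q(z) = P(z) (i.e. the power series represents the rational function P/Q near 0). If moreover the family a is summable (∑_k a k < ∞), then there exists ε > 0 such that for every w : Fin n → ℂ with ‖w i‖ ≤ 1 + ε for all i, the family k ↦ a k · ∏_i (w i)^(k i) is absolutely summable. -/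
open Polynomial Metric Set Filter
open scoped Topology NNReal ENNReal

lemma aux_core (b : ℕ → ℝ) (hb0 : ∀ m, 0 ≤ b m) (hb : Summable b)
    (p q : Polynomial ℂ) (hq0 : Polynomial.eval 0 q ≠ 0) (r : ℝ) (hr : 0 < r)
    (heq : ∀ t : ℂ, ‖t‖ < r → (∑' m, (b m : ℂ) * t ^ m) * q.eval t = p.eval t) :
    ∃ ρ : ℝ, 1 < ρ ∧ Summable (fun m => b m * ρ ^ m) := by
  classical
  set F : FormalMultilinearSeries ℂ ℂ ℂ :=
    FormalMultilinearSeries.ofScalars ℂ (fun m => (b m : ℂ)) with hF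
  have hFnorm : ∀ m, ‖F m‖ = b m := by
    intro m
    rw [hF, FormalMultilinearSeries.ofScalars_norm]
    simp [abs_of_nonneg (hb0 m)]
  have hrad : (1 : ℝ≥0∞) ≤ F.radius := by
    have : Summable (fun m => ‖F m‖ * (1 : ℝ≥0) ^ m) := by
      simpa [hFnorm] using hb
    simpa using F.le_radius_of_summable_norm this
  set g : ℂ → ℂ := F.sum with hg
  have hgsum : ∀ t : ℂ, g t = ∑' m, (b m : ℂ) * t ^ m := by
    intro t
    rw [hg]
    exact (FormalMultilinearSeries.ofScalars_sum_eq _ t).trans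
      (tsum_congr fun m => by rw [smul_eq_mul])
  have hterm : ∀ t : ℂ, ‖t‖ ≤ 1 → ∀ m, ‖(b m : ℂ) * t ^ m‖ ≤ b m := by
    intro t ht m
    rw [norm_mul, norm_pow]
    calc ‖(b m : ℂ)‖ * ‖t‖ ^ m ≤ ‖(b m : ℂ)‖ * 1 := by
          gcongr
          exacts [pow_le_one₀ (norm_nonneg t) ht]
      _ = b m := by simp [abs_of_nonneg (hb0 m)]
  have htermsummable : ∀ t : ℂ, ‖t‖ ≤ 1 → Summable (fun m => ‖(b m : ℂ) * t ^ m‖) :=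
    fun t ht => Summable.of_nonneg_of_le (fun m => norm_nonneg _) (hterm t ht) hb
  have hgnorm : ∀ t : ℂ, ‖t‖ ≤ 1 → ‖g t‖ ≤ ∑' m, b m := by
    intro t ht
    rw [hgsum]
    calc ‖∑' m, (b m : ℂ) * t ^ m‖ ≤ ∑' m, ‖(b m : ℂ) * t ^ m‖ :=
          norm_tsum_le_tsum_norm (htermsummable t ht)
      _ ≤ ∑' m, b m := Summable.tsum_le_tsum (hterm t ht) (htermsummable t ht) hb
  have hgball : HasFPowerSeriesOnBall g F 0 1 :=
    (F.hasFPowerSeriesOnBall (lt_of_lt_of_le zero_lt_one hrad)).mono zero_lt_one hrad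
  have hganal : AnalyticOnNhd ℂ g (ball (0:ℂ) 1) := by
    have := hgball.differentiableOn
    rw [show ((1:ℝ≥0∞)) = ENNReal.ofReal (1:ℝ) by simp, Metric.emetric_ball] at this
    exact this.analyticOnNhd isOpen_ball
  have hpoly : ∀ f : Polynomial ℂ, AnalyticOnNhd ℂ (fun t => f.eval t) (ball (0:ℂ) 1) :=
    fun f => (f.differentiable.differentiableOn).analyticOnNhd isOpen_ball
  -- identity theorem step 1
  have hkey : Set.EqOn (fun t => g t * q.eval t) (fun t => p.eval t) (ball (0:ℂ) 1) := by
    apply AnalyticOnNhd.eqOn_of_preconnected_of_eventuallyEq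
      (hganal.mul (hpoly q)) (hpoly p) (convex_ball (0:ℂ) 1).isPreconnected
      (mem_ball_self zero_lt_one)
    have hmem : ball (0:ℂ) (min r 1) ∈ 𝓝 (0:ℂ) :=
      ball_mem_nhds _ (lt_min hr zero_lt_one)
    filter_upwards [hmem] with t ht
    rw [mem_ball, dist_zero_right] at ht
    have h1 : ‖t‖ < r := ht.trans_le (min_le_left _ _)
    simpa [hgsum t] using heq t h1
  -- gcd reduction
  have hqne : q ≠ 0 := fun h => hq0 (by simp [h])
  set d : Polynomial ℂ := gcd p q with hd
  set p' : Polynomial ℂ := p / d with hp'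
  set q' : Polynomial ℂ := q / d with hq'
  have hd0 : d ≠ 0 := gcd_ne_zero_of_right hqne
  have hcop : IsCoprime p' q' := isCoprime_div_gcd_div_gcd hqne
  have hpfac : d * p' = p := EuclideanDomain.mul_div_cancel' hd0 (gcd_dvd_left p q)
  have hqfac : d * q' = q := EuclideanDomain.mul_div_cancel' hd0 (gcd_dvd_right p q)
  have hdq : ∀ t : ℂ, q.eval t = d.eval t * q'.eval t := by
    intro t; rw [← hqfac]; simp
  have hdp : ∀ t : ℂ, p.eval t = d.eval t * p'.eval t := by
    intro t; rw [← hpfac]; simp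
  have hdeval0 : d.eval 0 ≠ 0 := by
    intro h
    exact hq0 (by rw [hdq 0, h, zero_mul])
  have hq'eval0 : q'.eval 0 ≠ 0 := by
    intro h
    exact hq0 (by rw [hdq 0, h, mul_zero])
  have hq'ne : q' ≠ 0 := fun h => hq'eval0 (by simp [h])
  -- identity theorem step 2
  have hkey2 : Set.EqOn (fun t => g t * q'.eval t) (fun t => p'.eval t) (ball (0:ℂ) 1) := by
    apply AnalyticOnNhd.eqOn_of_preconnected_of_eventuallyEq
      (hganal.mul (hpoly q')) (hpoly p') (convex_ball (0:ℂ) 1).isPreconnected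
      (mem_ball_self zero_lt_one)
    have hmem1 : ball (0:ℂ) 1 ∈ 𝓝 (0:ℂ) := ball_mem_nhds _ zero_lt_one
    have hmem2 : ∀ᶠ t in 𝓝 (0:ℂ), d.eval t ≠ 0 :=
      (d.continuous.continuousAt).eventually_ne hdeval0
    filter_upwards [hmem1, hmem2] with t ht hdt
    have := hkey ht
    simp only [hdq t, hdp t] at this
    have h2 : d.eval t * (g t * q'.eval t) = d.eval t * p'.eval t := by
      linear_combination this
    exact mul_left_cancel₀ hdt h2
  -- all roots of q' have modulus > 1
  set C : ℝ := ∑' m, b m with hC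
  have hroots : ∀ ζ : ℂ, q'.eval ζ = 0 → 1 < ‖ζ‖ := by
    intro ζ hζ
    by_contra hle
    push_neg at hle
    have hp'ζ : p'.eval ζ ≠ 0 := by
      obtain ⟨u, v, huv⟩ := hcop
      intro h
      have := congrArg (Polynomial.eval ζ) huv
      simp [h, hζ] at this
    have hineq : ∀ s ∈ Set.Ioo (0:ℝ) 1,
        ‖p'.eval ((s:ℂ) * ζ)‖ ≤ C * ‖q'.eval ((s:ℂ) * ζ)‖ := by
      intro s hs
      have hts : ‖(s:ℂ) * ζ‖ < 1 := by
        rw [norm_mul, Complex.norm_real, Real.norm_eq_abs, abs_of_pos hs.1]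
        nlinarith [hs.1, hs.2, norm_nonneg ζ]
      have hmem : (s:ℂ) * ζ ∈ ball (0:ℂ) 1 := by
        rwa [mem_ball, dist_zero_right]
      have := (hkey2 hmem).symm
      simp only at this
      rw [this, norm_mul]
      exact mul_le_mul_of_nonneg_right (hgnorm _ hts.le) (norm_nonneg _)
    have l1 : Tendsto (fun s : ℝ => ‖p'.eval ((s:ℂ) * ζ)‖) (𝓝[<] 1) (𝓝 ‖p'.eval ζ‖) := by
      have hc : Continuous (fun s : ℝ => ‖p'.eval ((s:ℂ) * ζ)‖) :=
        (p'.continuous.comp (Complex.continuous_ofReal.mul continuous_const)).norm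
      have := hc.tendsto 1
      simp only [Complex.ofReal_one, one_mul] at this
      exact this.mono_left nhdsWithin_le_nhds
    have l2 : Tendsto (fun s : ℝ => C * ‖q'.eval ((s:ℂ) * ζ)‖) (𝓝[<] 1)
        (𝓝 (C * ‖q'.eval ζ‖)) := by
      have hc : Continuous (fun s : ℝ => C * ‖q'.eval ((s:ℂ) * ζ)‖) :=
        continuous_const.mul (q'.continuous.comp (Complex.continuous_ofReal.mul continuous_const)).norm
      have := hc.tendsto 1
      simp only [Complex.ofReal_one, one_mul] at this
      exact this.mono_left nhdsWithin_le_nhds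
    have hbound : ‖p'.eval ζ‖ ≤ C * ‖q'.eval ζ‖ := by
      refine le_of_tendsto_of_tendsto l1 l2 ?_
      filter_upwards [Ioo_mem_nhdsLT_of_mem (show (1:ℝ) ∈ Set.Ioc 0 1 by constructor <;> norm_num)]
        with s hs
      exact hineq s hs
    rw [hζ] at hbound
    simp only [norm_zero, mul_zero] at hbound
    exact hp'ζ (norm_le_zero_iff.mp hbound)
  -- choose ρ' > 1 with no roots of q' in closedBall 0 ρ'
  obtain ⟨ρ', hρ'1, hρ'root⟩ : ∃ ρ' : ℝ, 1 < ρ' ∧ ∀ t : ℂ, ‖t‖ ≤ ρ' → q'.eval t ≠ 0 := by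
    rcases q'.roots.toFinset.eq_empty_or_nonempty with hS | hS
    · refine ⟨2, one_lt_two, fun t _ ht => ?_⟩
      have : t ∈ q'.roots.toFinset := by
        rw [Multiset.mem_toFinset, Polynomial.mem_roots hq'ne]
        exact ht
      rw [hS] at this
      exact absurd this (Finset.notMem_empty t)
    · set ρ'' : ℝ := q'.roots.toFinset.inf' hS (fun z => ‖z‖) with hρ''
      have hρ''1 : 1 < ρ'' := by
        rw [hρ'', Finset.lt_inf'_iff]
        intro z hz
        rw [Multiset.mem_toFinset, Polynomial.mem_roots hq'ne] at hz
        exact hroots z hz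
      refine ⟨(1 + ρ'') / 2, by linarith, fun t ht hroot => ?_⟩
      have : t ∈ q'.roots.toFinset := by
        rw [Multiset.mem_toFinset, Polynomial.mem_roots hq'ne]
        exact hroot
      have h2 : ρ'' ≤ ‖t‖ := Finset.inf'_le _ this
      linarith
  have hρ'0 : 0 < ρ' := lt_trans zero_lt_one hρ'1
  set h : ℂ → ℂ := fun t => p'.eval t / q'.eval t with hh
  have hdiff : DifferentiableOn ℂ h (closedBall (0:ℂ) (ρ'.toNNReal : ℝ)) := by
    apply DifferentiableOn.div
    · exact p'.differentiable.differentiableOn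
    · exact q'.differentiable.differentiableOn
    · intro t ht
      rw [mem_closedBall, dist_zero_right] at ht
      exact hρ'root t (by rwa [Real.coe_toNNReal _ hρ'0.le] at ht)
  have hρ'nn : 0 < ρ'.toNNReal := Real.toNNReal_pos.mpr hρ'0
  have hhball : HasFPowerSeriesOnBall h (cauchyPowerSeries h 0 ρ'.toNNReal) 0 ρ'.toNNReal :=
    hdiff.hasFPowerSeriesOnBall hρ'nn
  -- g and h agree near 0
  have hgh : g =ᶠ[𝓝 (0:ℂ)] h := by
    filter_upwards [ball_mem_nhds (0:ℂ) zero_lt_one] with t ht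
    have hq't : q'.eval t ≠ 0 := by
      apply hρ'root
      rw [mem_ball, dist_zero_right] at ht
      linarith
    have := hkey2 ht
    simp only at this
    rw [hh]
    field_simp
    linear_combination this
  have hFeq : F = cauchyPowerSeries h 0 ρ'.toNNReal :=
    HasFPowerSeriesAt.eq_formalMultilinearSeries_of_eventually
      hgball.hasFPowerSeriesAt hhball.hasFPowerSeriesAt hgh
  have hradF : (ρ'.toNNReal : ℝ≥0∞) ≤ F.radius := by
    rw [hFeq]
    exact hhball.r_le
  set ρ : ℝ := (1 + ρ') / 2 with hρ
  have hρ1 : 1 < ρ := by rw [hρ]; linarith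
  have hρρ' : ρ < ρ' := by rw [hρ]; linarith
  have hsum2 : Summable (fun m => ‖F m‖ * ρ ^ m) := by
    have h1 : (ρ.toNNReal : ℝ≥0∞) < F.radius := by
      apply lt_of_lt_of_le _ hradF
      rw [ENNReal.coe_lt_coe]
      rw [Real.toNNReal_lt_toNNReal_iff hρ'0]
      exact hρρ'
    have := F.summable_norm_mul_pow h1
    simpa [Real.coe_toNNReal _ (by linarith : (0:ℝ) ≤ ρ)] using this
  refine ⟨ρ, hρ1, ?_⟩
  simpa [hFnorm] using hsum2

theorem stmt14 (n : ℕ) (hn : 1 ≤ n) (P Q : MvPolynomial (Fin n) ℂ)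
    (a : (Fin n → ℕ) → ℝ) (ha : ∀ k, 0 ≤ a k)
    (hrat : ∃ r : ℝ, 0 < r ∧ ∀ z : Fin n → ℂ, (∀ i, ‖z i‖ < r) →
      Summable (fun k : Fin n → ℕ => ‖(a k : ℂ) * ∏ i, (z i) ^ (k i)‖) ∧
      MvPolynomial.eval z Q ≠ 0 ∧
      (∑' k : Fin n → ℕ, (a k : ℂ) * ∏ i, (z i) ^ (k i)) * MvPolynomial.eval z Q
        = MvPolynomial.eval z P)
    (hsum : Summable a) :
    ∃ ε : ℝ, 0 < ε ∧ ∀ w : Fin n → ℂ, (∀ i, ‖w i‖ ≤ 1 + ε) →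
      Summable (fun k : Fin n → ℕ => ‖(a k : ℂ) * ∏ i, (w i) ^ (k i)‖) := by
  classical
  obtain ⟨r, hr, hmain⟩ := hrat
  set σf : (Fin n → ℕ) → ℕ := fun k => ∑ i, k i with hσf
  set b : ℕ → ℝ := fun m => ∑' k : σf ⁻¹' {m}, a k.1 with hb
  have hb0 : ∀ m, 0 ≤ b m := fun m => tsum_nonneg (fun k => ha k.1)
  have hbsum : Summable b := (hsum.hasSum.tsum_fiberwise σf).summable
  have hfib : ∀ m, Summable (fun k : σf ⁻¹' {m} => a k.1) := fun m => hsum.subtype _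
  -- regrouping in ℂ
  have hregroup : ∀ t : ℂ, Summable (fun k : Fin n → ℕ => (a k : ℂ) * t ^ σf k) →
      (∑' k : Fin n → ℕ, (a k : ℂ) * t ^ σf k) = ∑' m, (b m : ℂ) * t ^ m := by
    intro t hS
    have h1 : HasSum (fun m => ∑' k : σf ⁻¹' {m}, (a k.1 : ℂ) * t ^ σf k.1)
        (∑' k : Fin n → ℕ, (a k : ℂ) * t ^ σf k) :=
      hS.hasSum.tsum_fiberwise σf
    have h2 : ∀ m, (∑' k : σf ⁻¹' {m}, (a k.1 : ℂ) * t ^ σf k.1) = (b m : ℂ) * t ^ m := by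
      intro m
      have e1 : (∑' k : σf ⁻¹' {m}, (a k.1 : ℂ) * t ^ σf k.1)
          = ∑' k : σf ⁻¹' {m}, (a k.1 : ℂ) * t ^ m :=
        tsum_congr fun k => by rw [k.2]
      rw [e1, tsum_mul_right, hb]
      congr 1
      rw [Complex.ofReal_tsum]
    rw [← h1.tsum_eq]
    exact tsum_congr h2
  -- the one-variable polynomials
  set pX : Polynomial ℂ := MvPolynomial.eval₂ Polynomial.C (fun _ => Polynomial.X) P with hpX
  set qX : Polynomial ℂ := MvPolynomial.eval₂ Polynomial.C (fun _ => Polynomial.X) Q with hqX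
  have hevalT : ∀ (R : MvPolynomial (Fin n) ℂ) (t : ℂ),
      Polynomial.eval t (MvPolynomial.eval₂ Polynomial.C (fun _ => Polynomial.X) R)
        = MvPolynomial.eval (fun _ => t) R := by
    intro R t
    rw [show (Polynomial.eval t : Polynomial ℂ → ℂ) = (Polynomial.evalRingHom t : Polynomial ℂ →+* ℂ) from rfl,
      MvPolynomial.eval₂_comp_left (Polynomial.evalRingHom t) Polynomial.C (fun _ => Polynomial.X) R]
    have h1 : (Polynomial.evalRingHom t).comp Polynomial.C = RingHom.id ℂ := by
      ext x; simp
    rw [h1]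
    simp only [Function.comp_def, Polynomial.coe_evalRingHom, Polynomial.eval_X]
    rfl
  -- hypotheses of aux_core
  have hq0 : Polynomial.eval 0 qX ≠ 0 := by
    rw [hqX, hevalT Q 0]
    exact (hmain (fun _ => 0) (fun i => by simpa using hr)).2.1
  have heqc : ∀ t : ℂ, ‖t‖ < min r 1 →
      (∑' m, (b m : ℂ) * t ^ m) * qX.eval t = pX.eval t := by
    intro t ht
    have htr : ∀ i : Fin n, ‖(fun _ => t) i‖ < r := fun i => ht.trans_le (min_le_left _ _)
    obtain ⟨hS, hQ, hE⟩ := hmain (fun _ => t) htr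
    have hprod : ∀ k : Fin n → ℕ, (∏ i, t ^ k i) = t ^ σf k := by
      intro k
      rw [hσf]
      exact Finset.prod_pow_eq_pow_sum Finset.univ k t
    have hS' : Summable (fun k : Fin n → ℕ => (a k : ℂ) * t ^ σf k) := by
      have := hS.of_norm
      simpa [hprod] using this
    have hE' : (∑' k : Fin n → ℕ, (a k : ℂ) * t ^ σf k) * MvPolynomial.eval (fun _ => t) Q
        = MvPolynomial.eval (fun _ => t) P := by
      simpa [hprod] using hE
    rw [hregroup t hS'] at hE'
    rw [hqX, hpX, hevalT Q t, hevalT P t]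
    exact hE'
  obtain ⟨ρ, hρ1, hρsum⟩ := aux_core b hb0 hbsum pX qX hq0 (min r 1)
    (lt_min hr zero_lt_one) heqc
  -- conclude
  refine ⟨ρ - 1, by linarith, fun w hw => ?_⟩
  have hρ0 : (0:ℝ) ≤ ρ := by linarith
  have hwρ : ∀ i, ‖w i‖ ≤ ρ := by
    intro i
    have := hw i
    linarith
  -- summability of fun k => a k * ρ ^ σf k
  have hkey : Summable (fun k : Fin n → ℕ => a k * ρ ^ σf k) := by
    set e : (Σ m : ℕ, {k : Fin n → ℕ // σf k = m}) ≃ (Fin n → ℕ) := Equiv.sigmaFiberEquiv σf with he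
    rw [← e.summable_iff]
    have hnn : ∀ x : Σ m : ℕ, {k : Fin n → ℕ // σf k = m},
        0 ≤ ((fun k => a k * ρ ^ σf k) ∘ e) x :=
      fun x => mul_nonneg (ha _) (pow_nonneg hρ0 _)
    rw [summable_sigma_of_nonneg hnn]
    constructor
    · intro m
      have : Summable (fun k : {k : Fin n → ℕ // σf k = m} => a k.1 * ρ ^ m) :=
        (hsum.subtype _).mul_right _
      apply this.congr
      intro k
      show a k.1 * ρ ^ m = a k.1 * ρ ^ σf k.1
      rw [k.2]
    · apply hρsum.congr
      intro m
      have e2 : (∑' k : {k : Fin n → ℕ // σf k = m}, ((fun k => a k * ρ ^ σf k) ∘ e) ⟨m, k⟩)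
          = ∑' k : {k : Fin n → ℕ // σf k = m}, a k.1 * ρ ^ m := by
        apply tsum_congr
        intro k
        show a k.1 * ρ ^ σf k.1 = a k.1 * ρ ^ m
        rw [k.2]
      rw [e2, tsum_mul_right]
      rfl
  apply Summable.of_nonneg_of_le (fun k => norm_nonneg _) _ hkey
  intro k
  rw [norm_mul, Complex.norm_real, Real.norm_eq_abs, abs_of_nonneg (ha k)]
  apply mul_le_mul_of_nonneg_left _ (ha k)
  rw [norm_prod]
  calc (∏ i, ‖(w i) ^ (k i)‖) ≤ ∏ i, ρ ^ (k i) := by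
        apply Finset.prod_le_prod (fun i _ => norm_nonneg _)
        intro i _
        rw [norm_pow]
        exact pow_le_pow_left₀ (norm_nonneg _) (hwρ i) _
    _ = ρ ^ σf k := Finset.prod_pow_eq_pow_sum Finset.univ k ρ
end

section
/- Let a : ℕ → ℝ with a n ≥ 0 for all n, let z be a nonzero complex number, and assume the family n ↦ a n · |z|^n is summable (so the family n ↦ a n · z^n is absolutely summable). Then ‖∑'_n a n · z^n‖ = ∑'_n a n · |z|^n if and only if for all m ≤ n with a m ≠ 0 and a n ≠ 0 one has z^(n−m) = (|z| : ℂ)^(n−m). In particular, if the support of a is contained in an arithmetic progression r + dℕ and d equals the greatest common divisor of the differences of elements of the support, the equality holds if and only if z^d = |z|^d. -/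
/-!
In a strictly convex space, equality in the triangle inequality for an absolutely summable
family forces any two terms onto a common ray: splitting off the terms `f i` and `f j` gives
`‖f i + f j‖ = ‖f i‖ + ‖f j‖`. Conversely, terms on a common ray add up in norm. For the terms
`a m z^m` and `a n z^n` with nonzero coefficients, lying on a common ray means that `z^(n-m)` is
a positive real, i.e. `z^(n-m) = |z|^(n-m)`. The exponents `k` with `z^k = |z|^k` are the
multiples of the order of `z / |z|`, which turns the condition into `z^d = |z|^d`.
-/

section TriangleEquality

variable {ι E : Type*} [NormedAddCommGroup E] [NormedSpace ℝ E] {f : ι → E}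

theorem sameRay_of_norm_tsum_eq_tsum_norm [StrictConvexSpace ℝ E] [CompleteSpace E]
    (hf : Summable fun i => ‖f i‖) (h : ‖∑' i, f i‖ = ∑' i, ‖f i‖) (i j : ι) :
    SameRay ℝ (f i) (f j) := by
  classical
  rcases eq_or_ne i j with rfl | hij
  · exact SameRay.rfl
  set s : Finset ι := {i, j}
  have hsplit := hf.of_norm.sum_add_tsum_compl (s := s)
  have hsplit_norm := hf.sum_add_tsum_compl (s := s)
  have hrest : ‖∑' x : ↑(↑s : Set ι)ᶜ, f x‖ ≤ ∑' x : ↑(↑s : Set ι)ᶜ, ‖f x‖ :=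
    norm_tsum_le_tsum_norm (hf.subtype _)
  rw [Finset.sum_pair hij] at hsplit hsplit_norm
  refine sameRay_iff_norm_add.2 (le_antisymm (norm_add_le _ _) ?_)
  have htriangle := norm_add_le (f i + f j) (∑' x : ↑(↑s : Set ι)ᶜ, f x)
  rw [hsplit, h, ← hsplit_norm] at htriangle
  linarith

theorem norm_tsum_eq_tsum_norm_of_sameRay (hf : Summable fun i => ‖f i‖)
    (h : ∀ i j, SameRay ℝ (f i) (f j)) : ‖∑' i, f i‖ = ∑' i, ‖f i‖ := by
  by_cases hzero : ∀ i, f i = 0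
  · simp [hzero]
  obtain ⟨i₀, hi₀⟩ := not_forall.1 hzero
  set v := ‖f i₀‖⁻¹ • f i₀
  have hv : ‖v‖ = 1 := norm_smul_inv_norm hi₀
  have hfv : ∀ i, f i = ‖f i‖ • v := by
    intro i
    rw [smul_smul, mul_comm, ← smul_smul, ← (h i₀ i).norm_smul_eq, smul_smul,
      inv_mul_cancel₀ (norm_ne_zero_iff.2 hi₀), one_smul]
  rw [tsum_congr hfv, hf.tsum_smul_const, norm_smul, hv, mul_one,
    Real.norm_of_nonneg (tsum_nonneg fun i => norm_nonneg _)]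

theorem norm_tsum_eq_tsum_norm_iff [StrictConvexSpace ℝ E] [CompleteSpace E]
    (hf : Summable fun i => ‖f i‖) :
    ‖∑' i, f i‖ = ∑' i, ‖f i‖ ↔ ∀ i j, SameRay ℝ (f i) (f j) :=
  ⟨sameRay_of_norm_tsum_eq_tsum_norm hf, norm_tsum_eq_tsum_norm_of_sameRay hf⟩

end TriangleEquality

theorem pow_eq_pow_iff_orderOf_div_dvd {G : Type*} [CommGroupWithZero G] {x y : G} (hy : y ≠ 0)
    (k : ℕ) : x ^ k = y ^ k ↔ orderOf (x / y) ∣ k := by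
  rw [orderOf_dvd_iff_pow_eq_one, div_pow, div_eq_one_iff_eq (pow_ne_zero k hy)]

theorem sameRay_ofReal_mul_pow_iff {a b : ℝ} (ha : 0 ≤ a) (hb : 0 ≤ b) (z : ℂ) (m k : ℕ) :
    SameRay ℝ ((a : ℂ) * z ^ m) ((b : ℂ) * z ^ (m + k)) ↔
      (a ≠ 0 → b ≠ 0 → z ^ k = (‖z‖ : ℂ) ^ k) := by
  have hnorm : ∀ c : ℝ, 0 ≤ c → ∀ n, ‖(c : ℂ) * z ^ n‖ = c * ‖z‖ ^ n := fun c hc n => by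
    rw [norm_mul, norm_pow, Complex.norm_of_nonneg hc]
  rw [sameRay_iff_norm_smul_eq, hnorm a ha, hnorm b hb, Complex.real_smul, Complex.real_smul]
  push_cast
  constructor
  · intro h ha0 hb0
    rcases eq_or_ne z 0 with rfl | hz
    · simp
    have hfactor : (a : ℂ) * b * ‖z‖ ^ m * z ^ m * (z ^ k - (‖z‖ : ℂ) ^ k) = 0 := by
      linear_combination h
    simpa [sub_eq_zero, ha0, hb0, hz] using hfactor
  · intro h
    by_cases ha0 : a = 0
    · simp [ha0]
    by_cases hb0 : b = 0
    · simp [hb0]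
    linear_combination ((a : ℂ) * b * ‖z‖ ^ m * z ^ m) * h ha0 hb0

theorem norm_tsum_ofReal_mul_pow_eq_iff (a : ℕ → ℝ) (ha : ∀ n, 0 ≤ a n) (z : ℂ)
    (hsum : Summable fun n : ℕ => a n * ‖z‖ ^ n) :
    ‖∑' n : ℕ, (a n : ℂ) * z ^ n‖ = ∑' n : ℕ, a n * ‖z‖ ^ n ↔
      ∀ m n : ℕ, m ≤ n → a m ≠ 0 → a n ≠ 0 → z ^ (n - m) = (‖z‖ : ℂ) ^ (n - m) := by
  have hnorm : ∀ n, ‖(a n : ℂ) * z ^ n‖ = a n * ‖z‖ ^ n := fun n => by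
    rw [norm_mul, norm_pow, Complex.norm_of_nonneg (ha n)]
  simp_rw [← hnorm] at hsum ⊢
  rw [norm_tsum_eq_tsum_norm_iff hsum]
  constructor
  · intro h m n hmn
    obtain ⟨k, rfl⟩ := Nat.exists_eq_add_of_le hmn
    rw [Nat.add_sub_cancel_left]
    exact (sameRay_ofReal_mul_pow_iff (ha m) (ha (m + k)) z m k).1 (h m (m + k))
  · intro h m n
    wlog hmn : m ≤ n generalizing m n
    · exact (this n m (le_of_not_ge hmn)).symm
    obtain ⟨k, rfl⟩ := Nat.exists_eq_add_of_le hmn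
    refine (sameRay_ofReal_mul_pow_iff (ha m) (ha (m + k)) z m k).2 ?_
    simpa using h m (m + k) hmn

theorem stmt15_general (a : ℕ → ℝ) (ha : ∀ n, 0 ≤ a n) (z : ℂ)
    (hsum : Summable fun n : ℕ => a n * ‖z‖ ^ n) :
    ((‖∑' n : ℕ, (a n : ℂ) * z ^ n‖ = ∑' n : ℕ, a n * ‖z‖ ^ n) ↔
      (∀ m n : ℕ, m ≤ n → a m ≠ 0 → a n ≠ 0 →
        z ^ (n - m) = ((‖z‖ : ℂ)) ^ (n - m))) ∧
    (∀ r d : ℕ,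
      (∀ n : ℕ, a n ≠ 0 → ∃ q : ℕ, n = r + d * q) →
      (∀ m n : ℕ, m ≤ n → a m ≠ 0 → a n ≠ 0 → d ∣ n - m) →
      (∀ e : ℕ, (∀ m n : ℕ, m ≤ n → a m ≠ 0 → a n ≠ 0 → e ∣ n - m) → e ∣ d) →
      ((‖∑' n : ℕ, (a n : ℂ) * z ^ n‖ = ∑' n : ℕ, a n * ‖z‖ ^ n) ↔
        z ^ d = ((‖z‖ : ℂ)) ^ d)) := by
  have hiff := norm_tsum_ofReal_mul_pow_eq_iff a ha z hsum
  refine ⟨hiff, fun r d _ hdvd hgcd => ?_⟩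
  rw [hiff]
  rcases eq_or_ne z 0 with rfl | hz
  · simp
  have hz' : (‖z‖ : ℂ) ≠ 0 := Complex.ofReal_ne_zero.2 (norm_ne_zero_iff.2 hz)
  simp_rw [pow_eq_pow_iff_orderOf_div_dvd hz']
  exact ⟨fun h => hgcd _ h, fun h m n hmn hm hn => h.trans (hdvd m n hmn hm hn)⟩

theorem stmt15 (a : ℕ → ℝ) (ha : ∀ n, 0 ≤ a n) (z : ℂ) (hz : z ≠ 0)
    (hsum : Summable fun n : ℕ => a n * ‖z‖ ^ n) :
    ((‖∑' n : ℕ, (a n : ℂ) * z ^ n‖ = ∑' n : ℕ, a n * ‖z‖ ^ n) ↔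
      (∀ m n : ℕ, m ≤ n → a m ≠ 0 → a n ≠ 0 →
        z ^ (n - m) = ((‖z‖ : ℂ)) ^ (n - m))) ∧
    (∀ r d : ℕ,
      (∀ n : ℕ, a n ≠ 0 → ∃ q : ℕ, n = r + d * q) →
      (∀ m n : ℕ, m ≤ n → a m ≠ 0 → a n ≠ 0 → d ∣ n - m) →
      (∀ e : ℕ, (∀ m n : ℕ, m ≤ n → a m ≠ 0 → a n ≠ 0 → e ∣ n - m) → e ∣ d) →
      ((‖∑' n : ℕ, (a n : ℂ) * z ^ n‖ = ∑' n : ℕ, a n * ‖z‖ ^ n) ↔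
        z ^ d = ((‖z‖ : ℂ)) ^ d)) :=
  stmt15_general a ha z hsum
end
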